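/- arXiv:1407.2870 — 16 statements merged into one kernel-verified Lean document; each statement's English description precedes it below -/
import Mathlib

section
/- Let a₁,b₁,a₂,b₂,a₃,b₃ be real numbers such that the vectors (a₁,b₁) and (a₂,b₂) are linearly independent over ℝ. Let G₁,G₂,G₃ : ℂ → ℂ be analytic on the open unit disk with Gᵢ(0)=0 and Gᵢ′(0)=0 for i=1,2,3. Define f on the punctured unit disk {z ∈ ℂ : 0<|z|<1} by f(z) = (Re((a₁+i b₁)z + G₁(z)), Re((a₂+i b₂)z + G₂(z)), log|z| + Re((a₃+i b₃)z + G₃(z))). Then there exists ε ∈ (0,1) such that the restriction of f to {z : 0<|z|<ε} is injective, its real derivative is injective at every such point, and ‖f(z)‖ → ∞ as z → 0. (In other words, a meromorphic end of order 1 in normal form whose leading coefficients a₁+b₁i and a₂+b₂i are independent over ℝ is properly embedded.) -/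
/-!
The first two coordinates of `f` form a map `p : ℂ → ℝ²` that is smooth at `0` with derivative
`v ↦ (Re((a₁ + b₁ i) v), Re((a₂ + b₂ i) v))` (as `Gᵢ'(0) = 0`), which is injective precisely
because `(a₁, b₁)` and `(a₂, b₂)` are independent. An injective linear map is antilipschitz, and a
perturbation by a map of small Lipschitz constant stays injective; near `0` both `p - Dp(0)` and
`Dp(z) - Dp(0)` are such small perturbations, so `p`, hence `f`, is injective with injective
derivative on a small punctured disc. Properness comes from the third coordinate alone, whose
`log |z|` term tends to `-∞` while the rest stays bounded.
-/

open Complex Filter Function Metric Set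
open scoped NNReal Topology

theorem AntilipschitzWith.injOn_add_of_lipschitzOnWith {α E : Type*} [EMetricSpace α]
    [SeminormedAddCommGroup E] {A g : α → E} {s : Set α} {K c : ℝ≥0}
    (hA : AntilipschitzWith K A) (hg : LipschitzOnWith c g s) (hc : c < K⁻¹) :
    InjOn (fun x => A x + g x) s :=
  injOn_iff_injective.2 <|
    ((hA.domRestrict s).add_lipschitzWith (lipschitzOnWith_iff_restrict.1 hg) hc).injective

section LocalEmbedding

variable {E F : Type*} [NormedAddCommGroup E] [NormedSpace ℝ E] [NormedAddCommGroup F]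
  [NormedSpace ℝ F]

theorem ContDiffAt.exists_injOn_ball_and_injective_fderiv [FiniteDimensional ℝ E] {p : E → F}
    {a : E} (hp : ContDiffAt ℝ 1 p a) (hinj : Injective (fderiv ℝ p a)) :
    ∃ ε > 0, InjOn p (ball a ε) ∧ ∀ z ∈ ball a ε, Injective (fderiv ℝ p z) := by
  set A := fderiv ℝ p a
  obtain ⟨K, hKpos, hK⟩ :=
    (A : E →ₗ[ℝ] F).exists_antilipschitzWith (LinearMap.ker_eq_bot.2 hinj)
  set c : ℝ≥0 := K⁻¹ / 2
  have hc : 0 < c := by positivity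
  have hcK : c < K⁻¹ := NNReal.half_lt_self (by positivity)
  obtain ⟨s, hs, hps⟩ :=
    (hp.hasStrictFDerivAt one_ne_zero).approximates_deriv_on_nhds (Or.inr hc)
  have hnear : ∀ᶠ z in 𝓝 a, fderiv ℝ p z ∈ ball A c :=
    (hp.fderiv_right (m := 0) le_rfl).continuousAt.eventually (ball_mem_nhds A hc)
  obtain ⟨ε, hε, hball⟩ := Metric.mem_nhds_iff.1 (inter_mem hs hnear)
  refine ⟨ε, hε, ?_, fun z hz => ?_⟩
  · simpa [A] using hK.injOn_add_of_lipschitzOnWith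
      (ApproximatesLinearOn.approximatesLinearOn_iff_lipschitzOnWith.1
        (hps.mono_set fun x hx => (hball hx).1)) hcK
  · have hzA : ‖fderiv ℝ p z - A‖₊ < c := by
      simpa [dist_eq_norm, ← NNReal.coe_lt_coe] using (hball hz).2
    simpa using (hK.add_lipschitzWith (fderiv ℝ p z - A).lipschitz (hzA.trans hcK)).injective

theorem injective_fderiv_of_injective_fderiv_comp {G : Type*} [NormedAddCommGroup G]
    [NormedSpace ℝ G] {f : E → F} {z : E} (π : F →L[ℝ] G) (hf : DifferentiableAt ℝ f z)
    (h : Injective (fderiv ℝ (π ∘ f) z)) : Injective (fderiv ℝ f z) := by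
  rw [(π.hasFDerivAt.comp z hf.hasFDerivAt).fderiv] at h
  exact Injective.of_comp (f := π) h

end LocalEmbedding

theorem LinearIndependent.pair_det_ne_zero {a₁ b₁ a₂ b₂ : ℝ}
    (h : LinearIndependent ℝ ![(a₁, b₁), (a₂, b₂)]) : a₁ * b₂ - b₁ * a₂ ≠ 0 := by
  intro hdet
  have hpair := LinearIndependent.pair_iff.1 h
  obtain ⟨hb₂, hb₁⟩ := hpair b₂ (-b₁) (Prod.ext (by simp; linear_combination hdet) (by simp; ring))
  obtain ⟨ha₂, ha₁⟩ := hpair a₂ (-a₁) (Prod.ext (by simp; ring) (by simp; linear_combination -hdet))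
  exact h.ne_zero 0 (by simp_all)

theorem injective_re_mul_prod {a₁ b₁ a₂ b₂ : ℝ}
    (h : LinearIndependent ℝ ![(a₁, b₁), (a₂, b₂)]) :
    Injective fun v : ℂ => ((((a₁ : ℂ) + b₁ * I) * v).re, (((a₂ : ℂ) + b₂ * I) * v).re) := by
  intro v w hvw
  simp only [Prod.mk.injEq, mul_re, add_re, add_im, ofReal_re, ofReal_im, mul_re, mul_im,
    I_re, I_im] at hvw
  have hdet := h.pair_det_ne_zero
  apply Complex.ext
  · apply mul_right_cancel₀ hdet
    linear_combination b₂ * hvw.1 - b₁ * hvw.2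
  · apply mul_right_cancel₀ hdet
    linear_combination a₂ * hvw.1 - a₁ * hvw.2

theorem AnalyticAt.contDiffAt_re {F : ℂ → ℂ} {z : ℂ} (h : AnalyticAt ℂ F z) {n : WithTop ℕ∞} :
    ContDiffAt ℝ n (fun w => (F w).re) z :=
  reCLM.contDiff.contDiffAt.comp z (h.contDiffAt.restrict_scalars ℝ)

theorem hasDerivAt_mul_add_of_deriv_eq_zero {G : ℂ → ℂ} {z : ℂ} (c : ℂ)
    (hG : DifferentiableAt ℂ G z) (hG' : deriv G z = 0) :
    HasDerivAt (fun w => c * w + G w) c z := by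
  have h := ((hasDerivAt_id z).const_mul c).add hG.hasDerivAt
  rwa [hG', mul_one, add_zero] at h

theorem injective_fderiv_re_prod {F₁ F₂ : ℂ → ℂ} {c₁ c₂ z : ℂ} (h₁ : HasDerivAt F₁ c₁ z)
    (h₂ : HasDerivAt F₂ c₂ z) (h : Injective fun v : ℂ => ((c₁ * v).re, (c₂ * v).re)) :
    Injective (fderiv ℝ (fun w => ((F₁ w).re, (F₂ w).re)) z) := by
  rw [HasFDerivAt.fderiv (f := fun w => ((F₁ w).re, (F₂ w).re))
    ((reCLM.hasFDerivAt.comp z h₁.complexToReal_fderiv).prodMk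
      (reCLM.hasFDerivAt.comp z h₂.complexToReal_fderiv))]
  convert h using 1
  ext v <;> simp

theorem LinearIndependent.exists_injOn_ball_re_mul_add {a₁ b₁ a₂ b₂ : ℝ}
    (hind : LinearIndependent ℝ ![(a₁, b₁), (a₂, b₂)]) {G₁ G₂ : ℂ → ℂ}
    (hG₁ : AnalyticAt ℂ G₁ 0) (hG₂ : AnalyticAt ℂ G₂ 0)
    (hG₁' : deriv G₁ 0 = 0) (hG₂' : deriv G₂ 0 = 0) :
    let p : ℂ → ℝ × ℝ := fun z =>
      ((((a₁ : ℂ) + b₁ * I) * z + G₁ z).re, (((a₂ : ℂ) + b₂ * I) * z + G₂ z).re)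
    ∃ ε > 0, InjOn p (ball 0 ε) ∧ ∀ z ∈ ball 0 ε, Injective (fderiv ℝ p z) := by
  intro p
  have hF : ∀ (c : ℂ) {G : ℂ → ℂ}, AnalyticAt ℂ G 0 → AnalyticAt ℂ (fun z => c * z + G z) 0 :=
    fun c G hG => by fun_prop
  have hp : ContDiffAt ℝ 1 p 0 :=
    (hF _ hG₁).contDiffAt_re.prodMk (hF _ hG₂).contDiffAt_re
  exact hp.exists_injOn_ball_and_injective_fderiv (injective_fderiv_re_prod
    (hasDerivAt_mul_add_of_deriv_eq_zero _ hG₁.differentiableAt hG₁')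
    (hasDerivAt_mul_add_of_deriv_eq_zero _ hG₂.differentiableAt hG₂')
    (injective_re_mul_prod hind))

theorem tendsto_abs_log_norm_add_atTop {E : Type*} [NormedAddCommGroup E] {g : E → ℝ}
    (hg : ContinuousAt g 0) : Tendsto (fun z => |Real.log ‖z‖ + g z|) (𝓝[≠] 0) atTop :=
  tendsto_abs_atBot_atTop.comp <|
    (Real.tendsto_log_nhdsGT_zero.comp tendsto_norm_nhdsNE_zero).atBot_add
      (hg.tendsto.mono_left nhdsWithin_le_nhds)

theorem stmt_0_general (a₁ b₁ a₂ b₂ a₃ b₃ : ℝ)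
    (hind : LinearIndependent ℝ ![(a₁, b₁), (a₂, b₂)])
    (G₁ G₂ G₃ : ℂ → ℂ)
    (hG₁ : AnalyticOnNhd ℂ G₁ (Metric.ball 0 1))
    (hG₂ : AnalyticOnNhd ℂ G₂ (Metric.ball 0 1))
    (hG₃ : AnalyticOnNhd ℂ G₃ (Metric.ball 0 1))
    (hG₁0' : deriv G₁ 0 = 0) (hG₂0' : deriv G₂ 0 = 0)
    (f : ℂ → ℝ × ℝ × ℝ)
    (hf : ∀ z, f z =
      ((((a₁ : ℂ) + b₁ * I) * z + G₁ z).re,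
       (((a₂ : ℂ) + b₂ * I) * z + G₂ z).re,
       Real.log (‖z‖) + (((a₃ : ℂ) + b₃ * I) * z + G₃ z).re)) :
    ∃ ε ∈ Set.Ioo (0 : ℝ) 1,
      Set.InjOn f {z : ℂ | 0 < ‖z‖ ∧ ‖z‖ < ε} ∧
      (∀ z : ℂ, 0 < ‖z‖ → ‖z‖ < ε →
        Function.Injective (fderiv ℝ f z)) ∧
      Tendsto (fun z : ℂ => ‖f z‖) (nhdsWithin 0 {z : ℂ | z ≠ 0}) atTop := by
  set F₁ : ℂ → ℂ := fun z => ((a₁ : ℂ) + b₁ * I) * z + G₁ z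
  set F₂ : ℂ → ℂ := fun z => ((a₂ : ℂ) + b₂ * I) * z + G₂ z
  set F₃ : ℂ → ℂ := fun z => ((a₃ : ℂ) + b₃ * I) * z + G₃ z
  have hF₁ : AnalyticOnNhd ℂ F₁ (ball 0 1) := fun z hz => by have := hG₁ z hz; fun_prop
  have hF₂ : AnalyticOnNhd ℂ F₂ (ball 0 1) := fun z hz => by have := hG₂ z hz; fun_prop
  have hF₃ : AnalyticOnNhd ℂ F₃ (ball 0 1) := fun z hz => by have := hG₃ z hz; fun_prop
  have h0 : (0 : ℂ) ∈ ball (0 : ℂ) 1 := mem_ball_self one_pos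
  set π : ℝ × ℝ × ℝ →L[ℝ] ℝ × ℝ := (ContinuousLinearMap.fst ℝ ℝ (ℝ × ℝ)).prod
    ((ContinuousLinearMap.fst ℝ ℝ ℝ).comp (ContinuousLinearMap.snd ℝ ℝ (ℝ × ℝ)))
  have hπf : π ∘ f = fun z => ((F₁ z).re, (F₂ z).re) := funext fun z => by simp [π, hf, F₁, F₂]
  obtain ⟨ε₀, hε₀, hinjOn, hinjD⟩ :=
    hind.exists_injOn_ball_re_mul_add (hG₁ 0 h0) (hG₂ 0 h0) hG₁0' hG₂0'
  rw [← hπf] at hinjOn hinjD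
  set ε := min ε₀ (1 / 2)
  have hball : ∀ z : ℂ, ‖z‖ < ε → z ∈ ball 0 ε₀ ∩ ball 0 1 := fun z hz => by
    simp only [mem_inter_iff, mem_ball_zero_iff]
    constructor <;> linarith [min_le_left ε₀ (1 / 2), min_le_right ε₀ (1 / 2)]
  refine ⟨ε, ⟨by positivity, by linarith [min_le_right ε₀ (1 / 2)]⟩,
    (hinjOn.mono fun z hz => (hball z hz.2).1).of_comp, fun z hz0 hzε => ?_, ?_⟩
  · have hz : z ≠ 0 := norm_pos_iff.1 hz0
    obtain ⟨hzε₀, hz1⟩ := hball z hzε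
    have hfd : DifferentiableAt ℝ f z := by
      rw [show f = _ from funext hf]
      exact ((hF₁ z hz1).contDiffAt_re.differentiableAt one_ne_zero).prodMk
        (((hF₂ z hz1).contDiffAt_re.differentiableAt one_ne_zero).prodMk
          (((differentiableAt_id.norm ℝ hz).log (norm_ne_zero_iff.2 hz)).add
            ((hF₃ z hz1).contDiffAt_re.differentiableAt one_ne_zero)))
    exact injective_fderiv_of_injective_fderiv_comp π hfd (hinjD z hzε₀)
  · refine tendsto_atTop_mono (fun z => ?_)
      (tendsto_abs_log_norm_add_atTop ((hF₃ 0 h0).contDiffAt_re (n := 0)).continuousAt)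
    have hf₃ : (f z).2.2 = Real.log ‖z‖ + (F₃ z).re := by rw [hf z]
    rw [← hf₃, ← Real.norm_eq_abs]
    exact (norm_snd_le (f z).2).trans (norm_snd_le (f z))

/-- A meromorphic end of order 1 in normal form whose leading coefficients
`a₁ + b₁ i` and `a₂ + b₂ i` are independent over `ℝ` is properly embedded. -/
theorem stmt_0 (a₁ b₁ a₂ b₂ a₃ b₃ : ℝ)
    (hind : LinearIndependent ℝ ![(a₁, b₁), (a₂, b₂)])
    (G₁ G₂ G₃ : ℂ → ℂ)
    (hG₁ : AnalyticOnNhd ℂ G₁ (Metric.ball 0 1))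
    (hG₂ : AnalyticOnNhd ℂ G₂ (Metric.ball 0 1))
    (hG₃ : AnalyticOnNhd ℂ G₃ (Metric.ball 0 1))
    (hG₁0 : G₁ 0 = 0) (hG₂0 : G₂ 0 = 0) (hG₃0 : G₃ 0 = 0)
    (hG₁0' : deriv G₁ 0 = 0) (hG₂0' : deriv G₂ 0 = 0) (hG₃0' : deriv G₃ 0 = 0)
    (f : ℂ → ℝ × ℝ × ℝ)
    (hf : ∀ z, f z =
      ((((a₁ : ℂ) + b₁ * I) * z + G₁ z).re,
       (((a₂ : ℂ) + b₂ * I) * z + G₂ z).re,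
       Real.log (‖z‖) + (((a₃ : ℂ) + b₃ * I) * z + G₃ z).re)) :
    ∃ ε ∈ Set.Ioo (0 : ℝ) 1,
      Set.InjOn f {z : ℂ | 0 < ‖z‖ ∧ ‖z‖ < ε} ∧
      (∀ z : ℂ, 0 < ‖z‖ → ‖z‖ < ε →
        Function.Injective (fderiv ℝ f z)) ∧
      Tendsto (fun z : ℂ => ‖f z‖) (nhdsWithin 0 {z : ℂ | z ≠ 0}) atTop :=
  stmt_0_general a₁ b₁ a₂ b₂ a₃ b₃ hind G₁ G₂ G₃ hG₁ hG₂ hG₃ hG₁0' hG₂0' f hf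
end

section
/- Let n ≥ 2 be an integer, a ∈ ℝ, and let G₁,G₂ : ℂ → ℂ be analytic on the open unit disk. Define f on the punctured unit disk by f(z) = (Re G₁(z), Re G₂(z), a·log|z| + Re(z^{1−n}/(1−n))). Then f is not a proper map: there exists a sequence (z_k) in ℂ∖{0} with z_k → 0 such that the sequence (f(z_k)) is bounded in ℝ³ (indeed one can choose z_k so that the third coordinate of f(z_k) equals 0). -/
open Complex Filter Topology

lemma re_ofReal_mul_exp_mul_I_zpow (r θ : ℝ) (k : ℤ) :
    (((r : ℂ) * exp (θ * I)) ^ k).re = r ^ k * Real.cos (k * θ) := by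
  rw [mul_zpow, ← ofReal_zpow, ← exp_int_mul, ← mul_assoc, ← ofReal_intCast, ← ofReal_mul,
    re_ofReal_mul, exp_ofReal_mul_I_re]

lemma exists_cos_int_mul_eq {k : ℤ} (hk : k ≠ 0) {t : ℝ} (ht : |t| ≤ 1) :
    ∃ θ : ℝ, Real.cos (k * θ) = t := by
  refine ⟨Real.arccos t / k, ?_⟩
  rw [mul_div_cancel₀ _ (Int.cast_ne_zero.mpr hk)]
  exact Real.cos_arccos (abs_le.mp ht).1 (abs_le.mp ht).2

/-- On the circle `‖z‖ = r` the term `Re (z ^ p / p)` oscillates with amplitude `r ^ p / |p|`,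
which dominates `a log r` as `r → 0`. -/
lemma eventually_exists_norm_eq_log_add_re_zpow_div_eq_zero (a : ℝ) {p : ℤ} (hp : p < 0) :
    ∀ᶠ r in 𝓝[>] (0 : ℝ), ∃ z : ℂ, ‖z‖ = r ∧ a * Real.log ‖z‖ + (z ^ p / p).re = 0 := by
  have ht : Tendsto (fun r : ℝ => -(p * a) * (Real.log r / r ^ p)) (𝓝[>] 0) (𝓝 0) := by
    simpa [Real.rpow_intCast] using
      (tendsto_log_div_rpow_nhdsGT_zero (Int.cast_lt_zero.mpr hp)).const_mul (-(p * a))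
  filter_upwards [self_mem_nhdsWithin, ht.eventually (Metric.closedBall_mem_nhds 0 one_pos)]
    with r (hr : 0 < r) hrt
  rw [Real.dist_eq, sub_zero] at hrt
  obtain ⟨θ, hθ⟩ := exists_cos_int_mul_eq hp.ne hrt
  have hp₀ : (p : ℝ) ≠ 0 := Int.cast_ne_zero.mpr hp.ne
  refine ⟨r * exp (θ * I), by simp [norm_exp_ofReal_mul_I, hr.le], ?_⟩
  rw [norm_mul, norm_exp_ofReal_mul_I, norm_real, Real.norm_of_nonneg hr.le, mul_one,
    ← ofReal_intCast, div_ofReal_re, re_ofReal_mul_exp_mul_I_zpow, hθ]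
  field_simp
  ring

lemma exists_seq_tendsto_zero_of_eventually_nhdsGT {E : Type*} [NormedAddCommGroup E]
    {P : E → Prop} (h : ∀ᶠ r in 𝓝[>] (0 : ℝ), ∃ x : E, ‖x‖ = r ∧ P x) :
    ∃ x : ℕ → E, (∀ k, x k ≠ 0 ∧ ‖x k‖ < 1 ∧ P (x k)) ∧ Tendsto x atTop (𝓝 0) := by
  have hsmall : ∀ᶠ r in 𝓝[>] (0 : ℝ), 0 < r ∧ r < 1 :=
    eventually_mem_nhdsWithin.and (nhdsWithin_le_nhds (Iio_mem_nhds one_pos))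
  obtain ⟨r, hr0, hr⟩ := exists_seq_forall_of_frequently (hsmall.and h).frequently
  choose x hxr hP using fun k => (hr k).2
  refine ⟨x, fun k => ⟨?_, (hxr k).trans_lt (hr k).1.2, hP k⟩, ?_⟩
  · exact norm_pos_iff.mp ((hxr k).symm ▸ (hr k).1.1)
  · rw [tendsto_zero_iff_norm_tendsto_zero, funext hxr]
    exact tendsto_nhdsWithin_iff.mp hr0 |>.1

/-- An end of type `(0,0,n)`, `n ≥ 2`, is never proper: there is a sequence
tending to the puncture along which the image stays bounded (indeed with
vanishing third coordinate). -/
theorem stmt_1 (n : ℕ) (hn : 2 ≤ n) (a : ℝ) (G₁ G₂ : ℂ → ℂ)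
    (hG₁ : AnalyticOnNhd ℂ G₁ (Metric.ball 0 1))
    (hG₂ : AnalyticOnNhd ℂ G₂ (Metric.ball 0 1))
    (f : ℂ → ℝ × ℝ × ℝ)
    (hf : ∀ z, f z =
      ((G₁ z).re, (G₂ z).re,
        a * Real.log ‖z‖ + (z ^ ((1 : ℤ) - n) / ((1 : ℂ) - n)).re)) :
    ∃ z : ℕ → ℂ, (∀ k, z k ≠ 0 ∧ ‖z k‖ < 1) ∧
      Tendsto z atTop (nhds 0) ∧
      (∃ C : ℝ, ∀ k, ‖f (z k)‖ ≤ C) ∧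
      (∀ k, (f (z k)).2.2 = 0) := by
  obtain ⟨z, hz, hz0⟩ := exists_seq_tendsto_zero_of_eventually_nhdsGT
    (eventually_exists_norm_eq_log_add_re_zpow_div_eq_zero a (p := 1 - n) (by omega))
  have hthird : ∀ k, (f (z k)).2.2 = 0 := fun k => by simpa [hf] using (hz k).2.2
  have hlim : Tendsto (fun k => f (z k)) atTop (𝓝 ((G₁ 0).re, (G₂ 0).re, 0)) := by
    have hre {G : ℂ → ℂ} (hG : AnalyticOnNhd ℂ G (Metric.ball 0 1)) :
        Tendsto (fun k => (G (z k)).re) atTop (𝓝 (G 0).re) :=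
      (continuous_re.tendsto _).comp ((hG 0 (by simp)).continuousAt.tendsto.comp hz0)
    refine ((hre hG₁).prodMk_nhds ((hre hG₂).prodMk_nhds tendsto_const_nhds)).congr fun k => ?_
    rw [← hthird k, hf]
  obtain ⟨C, hC⟩ := hlim.norm.bddAbove_range
  exact ⟨z, fun k => ⟨(hz k).1, (hz k).2.1⟩, hz0, ⟨C, fun k => hC ⟨k, rfl⟩⟩, hthird⟩
end

section
/- Let n ≥ 3 be an integer and define f : ℂ∖{0} → ℝ³ by f(z) = (Re z, log|z|, Re(z^{n−1})/(n−1) − Im z). Then: (1) f is injective; (2) f is an immersion, i.e. its real derivative is injective at every point of ℂ∖{0}; (3) f is proper, i.e. the preimage of every compact subset of ℝ³ is compact (equivalently ‖f(z)‖ → ∞ both as z → 0 and as |z| → ∞). -/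
open Complex ComplexConjugate Function

/-!
`Re z` and `log |z|` determine `z ≠ 0` up to conjugation, and the third coordinate
`Re(z^k)/c - Im z` separates `z` from `conj z` because `Re(z^k)` is conjugation invariant.
For the same reason the kernel of the derivative lies in `iℝ`, where the derivative of `log |z|`
is `Im z / |z|²` and, at real `z`, that of the third coordinate is `-1`.
Properness comes from `log |z|` alone: it pins `|z|` in a compact annulus.
-/

theorem hasFDerivAt_log_norm {E : Type*} [NormedAddCommGroup E] [InnerProductSpace ℝ E] {x : E}
    (hx : x ≠ 0) :
    HasFDerivAt (fun y : E => Real.log ‖y‖) ((‖x‖ ^ 2)⁻¹ • innerSL ℝ x) x := by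
  have h := ((hasStrictFDerivAt_norm_sq x).hasFDerivAt.log (by positivity)).const_mul (2⁻¹ : ℝ)
  have hlog : (fun y : E => Real.log ‖y‖) = fun y => 2⁻¹ * Real.log (‖y‖ ^ 2) := by
    funext y
    rw [Real.log_pow]
    push_cast
    ring
  rw [hlog]
  refine h.congr_fderiv ?_
  ext y
  simp only [smul_apply, coe_innerSL_apply, smul_eq_mul, nsmul_eq_mul]
  ring

theorem Complex.eq_or_eq_conj_of_re_eq_of_norm_eq {z w : ℂ} (hre : z.re = w.re)
    (hnorm : ‖z‖ = ‖w‖) : w = z ∨ w = conj z := by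
  have him : w.im ^ 2 = z.im ^ 2 := by
    have := congrArg (· ^ 2) hnorm
    simp only [Complex.sq_norm, normSq_apply, hre] at this
    nlinarith
  rcases sq_eq_sq_iff_eq_or_eq_neg.mp him with h | h
  · exact .inl (Complex.ext hre.symm h)
  · exact .inr (Complex.ext (by simp [hre]) (by simp [h]))

noncomputable def harmonicSphere (k : ℕ) (c : ℝ) (z : ℂ) : ℝ × ℝ × ℝ :=
  (z.re, Real.log ‖z‖, (z ^ k).re / c - z.im)

namespace harmonicSphere

variable (k : ℕ) (c : ℝ)

theorem injOn : Set.InjOn (harmonicSphere k c) {0}ᶜ := by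
  intro z hz w hw hzw
  simp only [harmonicSphere, Prod.mk.injEq] at hzw
  obtain ⟨hre, hlog, hthird⟩ := hzw
  have hnorm : ‖z‖ = ‖w‖ :=
    Real.log_injOn_pos (norm_pos_iff.mpr hz) (norm_pos_iff.mpr hw) hlog
  rcases eq_or_eq_conj_of_re_eq_of_norm_eq hre hnorm with rfl | rfl
  · rfl
  · rw [← map_pow, conj_re, conj_im] at hthird
    exact Complex.ext rfl (by simp only [conj_im]; linarith)

theorem hasFDerivAt {z : ℂ} (hz : z ≠ 0) :
    HasFDerivAt (harmonicSphere k c)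
      (reCLM.prod (((‖z‖ ^ 2)⁻¹ • innerSL ℝ z).prod
        (c⁻¹ • reCLM.comp ((k * z ^ (k - 1)) • (1 : ℂ →L[ℝ] ℂ)) - imCLM))) z := by
  have hpow := reCLM.hasFDerivAt.comp z (hasDerivAt_pow k z).complexToReal_fderiv
  refine reCLM.hasFDerivAt.prodMk ((hasFDerivAt_log_norm hz).prodMk ?_)
  convert (hpow.const_mul c⁻¹).sub imCLM.hasFDerivAt using 1
  funext w
  simp [div_eq_inv_mul]

theorem injective_fderiv {z : ℂ} (hz : z ≠ 0) : Injective (fderiv ℝ (harmonicSphere k c) z) := by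
  rw [(hasFDerivAt k c hz).fderiv, injective_iff_map_eq_zero]
  intro d hd
  have hre : d.re = 0 := congrArg Prod.fst hd
  have hinner : d.re * z.re + d.im * z.im = 0 := by simpa [hz] using congrArg (·.2.1) hd
  have hthird : c⁻¹ * (k * z ^ (k - 1) * d).re - d.im = 0 := congrArg (·.2.2) hd
  have him : d.im = 0 := by
    by_cases hzim : z.im = 0
    · have hpow_im : (z ^ (k - 1)).im = 0 := by
        rw [← re_add_im z, hzim, ofReal_zero, zero_mul, add_zero, ← ofReal_pow, ofReal_im]
      simpa [hre, hpow_im] using hthird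
    · simpa [hre, hzim] using hinner
  exact Complex.ext hre him

theorem continuousOn : ContinuousOn (harmonicSphere k c) {0}ᶜ := by
  unfold harmonicSphere
  fun_prop (disch := simp_all)

theorem abs_log_norm_le_norm (z : ℂ) : |Real.log ‖z‖| ≤ ‖harmonicSphere k c z‖ :=
  (norm_fst_le (harmonicSphere k c z).2).trans (norm_snd_le _)

theorem isCompact_preimage {K : Set (ℝ × ℝ × ℝ)} (hK : IsCompact K) :
    IsCompact {z : ℂ | z ≠ 0 ∧ harmonicSphere k c z ∈ K} := by
  obtain ⟨r, hr⟩ := hK.isBounded.subset_closedBall 0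
  set A := Metric.closedBall (0 : ℂ) (Real.exp r) \ Metric.ball 0 (Real.exp (-r))
  have hA : IsCompact A := (isCompact_closedBall _ _).diff Metric.isOpen_ball
  have hA0 : A ⊆ {0}ᶜ := by
    rintro _ hz rfl
    have := Real.exp_pos (-r)
    simp only [A, Set.mem_sdiff, Metric.mem_closedBall, Metric.mem_ball, dist_self] at hz
    exact hz.2 this
  have hpreimage : {z : ℂ | z ≠ 0 ∧ harmonicSphere k c z ∈ K} = A ∩ harmonicSphere k c ⁻¹' K := by
    ext z
    refine ⟨fun ⟨hz, hzK⟩ => ⟨?_, hzK⟩, fun ⟨hzA, hzK⟩ => ⟨hA0 hzA, hzK⟩⟩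
    have hlog : |Real.log ‖z‖| ≤ r :=
      (abs_log_norm_le_norm k c z).trans (by simpa using hr hzK)
    have hpos : 0 < ‖z‖ := norm_pos_iff.mpr hz
    simp only [A, Set.mem_sdiff, Metric.mem_closedBall, Metric.mem_ball, dist_zero_right, not_lt]
    rw [← Real.log_le_iff_le_exp hpos, ← Real.le_log_iff_exp_le hpos]
    exact ⟨(abs_le.mp hlog).2, (abs_le.mp hlog).1⟩
  rw [hpreimage]
  exact hA.of_isClosed_subset
    (((continuousOn k c).mono hA0).preimage_isClosed_of_isClosed hA.isClosed hK.isClosed)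
    Set.inter_subset_left

end harmonicSphere

theorem stmt_2_general (n : ℕ) (f : ℂ → ℝ × ℝ × ℝ)
    (hf : ∀ z, f z =
      (z.re, Real.log ‖z‖, (z ^ (n - 1)).re / ((n : ℝ) - 1) - z.im)) :
    Set.InjOn f {z : ℂ | z ≠ 0} ∧
    (∀ z : ℂ, z ≠ 0 → Function.Injective (fderiv ℝ f z)) ∧
    (∀ K : Set (ℝ × ℝ × ℝ), IsCompact K →
      IsCompact {z : ℂ | z ≠ 0 ∧ f z ∈ K}) := by
  obtain rfl : f = harmonicSphere (n - 1) ((n : ℝ) - 1) := funext hf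
  exact ⟨harmonicSphere.injOn _ _, fun _ hz => harmonicSphere.injective_fderiv _ _ hz,
    fun _ hK => harmonicSphere.isCompact_preimage _ _ hK⟩

/-- The sphere with one `(1,0,0)` end at `0` and one `(1,2,n)` end at `∞`:
`f(z) = (Re z, log|z|, Re(z^{n-1})/(n-1) - Im z)` is injective, an immersion,
and proper on `ℂ ∖ {0}`. -/
theorem stmt_2 (n : ℕ) (hn : 3 ≤ n) (f : ℂ → ℝ × ℝ × ℝ)
    (hf : ∀ z, f z =
      (z.re, Real.log ‖z‖, (z ^ (n - 1)).re / ((n : ℝ) - 1) - z.im)) :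
    Set.InjOn f {z : ℂ | z ≠ 0} ∧
    (∀ z : ℂ, z ≠ 0 → Function.Injective (fderiv ℝ f z)) ∧
    (∀ K : Set (ℝ × ℝ × ℝ), IsCompact K →
      IsCompact {z : ℂ | z ≠ 0 ∧ f z ∈ K}) :=
  stmt_2_general n f hf
end

section
/- Define f : ℂ∖{0} → ℝ³ by f(z) = (Re(−z²/2 − z^{−2}/2), Im(1/z), Re z). Then f is injective and proper (the preimage of every compact subset of ℝ³ is compact), i.e. f is a proper embedding of the twice-punctured sphere with two ends of type (0,2,3) at 0 and ∞. -/
/-!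
Write `z = x + iy`. The involution `z ↦ i / z` exchanges the two ends and acts on the image by the
isometry `(a, b, c) ↦ (-a, -c, -b)` of the sup norm, so properness reduces to the single estimate
`|z| ≤ 2M + 1` when `f z` has sup norm at most `M`; it comes from `|x| ≤ M` and
`2 f₁(z) = (y² - x²)(1 + |z|⁻⁴)`. For injectivity, `f₃` fixes `x` and `f₂ = -y / (x² + y²)` leaves
only `y` and `x² / y`, which give `y² - x²` opposite signs, so `f₁` tells them apart.
-/

open Complex

noncomputable def harmonicMap (z : ℂ) : ℝ × ℝ × ℝ :=
  ((-(z ^ 2) / 2 - z ^ (-2 : ℤ) / 2).re, (1 / z).im, z.re)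

lemma two_mul_harmonicMap_fst (z : ℂ) :
    2 * (harmonicMap z).1 = (z.im ^ 2 - z.re ^ 2) * (1 + (normSq z ^ 2)⁻¹) := by
  have hsq : (z ^ 2).re = z.re ^ 2 - z.im ^ 2 := by rw [pow_two, mul_re]; ring
  simp only [harmonicMap, zpow_neg, zpow_ofNat, sub_re, div_ofNat_re, neg_re, inv_re, hsq,
    map_pow]
  ring

lemma harmonicMap_snd_fst (z : ℂ) : (harmonicMap z).2.1 = -z.im / normSq z := by
  simp [harmonicMap, inv_im]

lemma harmonicMap_I_div (z : ℂ) :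
    harmonicMap (I / z) = (-(harmonicMap z).1, -(harmonicMap z).2.2, -(harmonicMap z).2.1) := by
  have h2 : (I / z) ^ 2 = -(z ^ 2)⁻¹ := by rw [div_pow, I_sq, neg_div, one_div]
  simp only [harmonicMap, zpow_neg, zpow_ofNat, h2, inv_neg, inv_inv, one_div_div]
  refine Prod.ext ?_ (Prod.ext ?_ ?_)
  · simp only [sub_re, div_ofNat_re, neg_re]; ring
  · simp [div_I]
  · simp [div_eq_mul_inv, mul_re]

lemma norm_harmonicMap_I_div (z : ℂ) : ‖harmonicMap (I / z)‖ = ‖harmonicMap z‖ := by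
  rw [harmonicMap_I_div, Prod.norm_def, Prod.norm_def, Prod.norm_def, Prod.norm_def]
  simp only [norm_neg, max_comm ‖(harmonicMap z).2.2‖]

lemma normSq_le_harmonicMap (z : ℂ) :
    normSq z ≤ 2 * z.re ^ 2 + 2 * |(harmonicMap z).1| := by
  have h := two_mul_harmonicMap_fst z
  have hu : 0 ≤ (normSq z ^ 2)⁻¹ := by positivity
  rw [normSq_apply]
  rcases le_total (z.im ^ 2) (z.re ^ 2) with hle | hle
  · nlinarith [abs_nonneg (harmonicMap z).1]
  · nlinarith [le_abs_self (harmonicMap z).1, mul_nonneg (sub_nonneg.2 hle) hu]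

lemma norm_le_of_norm_harmonicMap_le {z : ℂ} {M : ℝ} (h : ‖harmonicMap z‖ ≤ M) :
    ‖z‖ ≤ 2 * M + 1 := by
  have h₁ : |(harmonicMap z).1| ≤ M := (norm_fst_le _).trans h
  have h₃ : |z.re| ≤ M := ((norm_snd_le _).trans (norm_snd_le _)).trans h
  have hM : 0 ≤ M := (abs_nonneg _).trans h₃
  have hz : ‖z‖ ^ 2 ≤ (2 * M + 1) ^ 2 := by
    rw [Complex.sq_norm]
    nlinarith [normSq_le_harmonicMap z, sq_abs z.re, abs_nonneg z.re]
  exact (pow_le_pow_iff_left₀ (norm_nonneg z) (by positivity) two_ne_zero).1 hz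

lemma continuousOn_harmonicMap : ContinuousOn harmonicMap {0}ᶜ := by
  have hzpow : ContinuousOn (fun z : ℂ => z ^ (-2 : ℤ)) {0}ᶜ :=
    fun z hz => (continuousAt_zpow₀ z (-2) (.inl hz)).continuousWithinAt
  have hdiv : ContinuousOn (fun z : ℂ => 1 / z) {0}ᶜ :=
    continuousOn_const.div continuousOn_id fun _ => id
  exact (continuous_re.comp_continuousOn (by fun_prop)).prodMk
    ((continuous_im.comp_continuousOn hdiv).prodMk continuous_re.continuousOn)

lemma eq_of_mul_eq_sq {x a b u v : ℝ} (hu : 0 ≤ u) (hv : 0 ≤ v) (hab : a * b = x ^ 2)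
    (h : (a ^ 2 - x ^ 2) * (1 + u) = (b ^ 2 - x ^ 2) * (1 + v)) : a = b := by
  have : (a - b) * (a * (1 + u) + b * (1 + v)) = 0 := by linear_combination h + (v - u) * hab
  rcases mul_eq_zero.1 this with h' | h'
  · linarith
  · have ha : a ^ 2 * (1 + u) + a * b * (1 + v) = 0 := by linear_combination a * h'
    have hb : a * b * (1 + u) + b ^ 2 * (1 + v) = 0 := by linear_combination b * h'
    nlinarith [mul_nonneg (sq_nonneg a) hu, mul_nonneg (sq_nonneg b) hv,
      mul_nonneg (sq_nonneg x) hu, mul_nonneg (sq_nonneg x) hv]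

lemma harmonicMap_injOn : Set.InjOn harmonicMap {0}ᶜ := by
  intro z hz w hw hzw
  have hre : z.re = w.re := congrArg (fun p => p.2.2) hzw
  have hnz : normSq z = z.re ^ 2 + z.im ^ 2 := by rw [normSq_apply]; ring
  have hnw : normSq w = z.re ^ 2 + w.im ^ 2 := by rw [normSq_apply, hre]; ring
  have hz0 : z.re ^ 2 + z.im ^ 2 ≠ 0 := hnz ▸ normSq_pos.2 hz |>.ne'
  have hw0 : z.re ^ 2 + w.im ^ 2 ≠ 0 := hnw ▸ normSq_pos.2 hw |>.ne'
  have h₂ := congrArg (fun p => p.2.1) hzw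
  have h₁ := congrArg (fun p => 2 * p.1) hzw
  simp only [harmonicMap_snd_fst, two_mul_harmonicMap_fst, hnz, hnw, ← hre] at h₁ h₂
  field_simp at h₂
  have hcases : (z.im - w.im) * (z.re ^ 2 - z.im * w.im) = 0 := by linear_combination -h₂
  refine Complex.ext hre ?_
  rcases mul_eq_zero.1 hcases with h | h
  · linarith
  · exact eq_of_mul_eq_sq (by positivity) (by positivity) (by linarith) h₁

lemma IsCompact.inter_preimage_of_isClosed {X Y : Type*} [TopologicalSpace X] [T2Space X]
    [TopologicalSpace Y] {f : X → Y} {C : Set X} {K : Set Y} (hC : IsCompact C)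
    (hf : ContinuousOn f C) (hK : IsClosed K) : IsCompact (C ∩ f ⁻¹' K) :=
  hC.of_isClosed_subset (hf.preimage_isClosed_of_isClosed hC.isClosed hK) Set.inter_subset_left

lemma mem_annulus_of_norm_harmonicMap_le {z : ℂ} {M : ℝ} (hz : z ≠ 0)
    (h : ‖harmonicMap z‖ ≤ M) :
    z ∈ Metric.closedBall 0 (2 * M + 1) \ Metric.ball 0 (2 * M + 1)⁻¹ := by
  have hρ : 0 < 2 * M + 1 := by linarith [norm_nonneg (harmonicMap z)]
  have hinv : ‖I / z‖ ≤ 2 * M + 1 :=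
    norm_le_of_norm_harmonicMap_le ((norm_harmonicMap_I_div z).trans_le h)
  rw [norm_div, norm_I, one_div, inv_le_comm₀ (norm_pos_iff.2 hz) hρ] at hinv
  simpa using ⟨norm_le_of_norm_harmonicMap_le h, hinv⟩

/-- The twice-punctured sphere with two ends of type `(0,2,3)`:
`f(z) = (Re(-z²/2 - z⁻²/2), Im(1/z), Re z)` is injective and proper on
`ℂ ∖ {0}`. -/
theorem stmt_4 (f : ℂ → ℝ × ℝ × ℝ)
    (hf : ∀ z, f z =
      ((-(z ^ 2) / 2 - z ^ (-2 : ℤ) / 2).re, (1 / z).im, z.re)) :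
    Set.InjOn f {z : ℂ | z ≠ 0} ∧
    (∀ K : Set (ℝ × ℝ × ℝ), IsCompact K →
      IsCompact {z : ℂ | z ≠ 0 ∧ f z ∈ K}) := by
  obtain rfl : f = harmonicMap := funext hf
  refine ⟨harmonicMap_injOn, fun K hK => ?_⟩
  obtain ⟨M, hM, hKM⟩ := hK.isBounded.exists_pos_norm_le
  set A := Metric.closedBall (0 : ℂ) (2 * M + 1) \ Metric.ball 0 (2 * M + 1)⁻¹
  have hA : A ⊆ {0}ᶜ := by
    rintro z ⟨-, hz⟩ rfl
    exact hz (Metric.mem_ball_self (by positivity))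
  have hS : {z : ℂ | z ≠ 0 ∧ harmonicMap z ∈ K} = A ∩ harmonicMap ⁻¹' K :=
    Set.ext fun z => ⟨fun ⟨hz, hzK⟩ => ⟨mem_annulus_of_norm_harmonicMap_le hz (hKM _ hzK), hzK⟩,
      fun ⟨hzA, hzK⟩ => ⟨hA hzA, hzK⟩⟩
  rw [hS]
  exact ((isCompact_closedBall 0 _).diff Metric.isOpen_ball).inter_preimage_of_isClosed
    (continuousOn_harmonicMap.mono hA) hK.isClosed
end

section
/- Let n ≥ 2 be an integer and define f : ℂ → ℝ³ by f(z) = (Re z, Re(z²)/2, Re(z^{n+1})/(n+1) − Im z). Then: (1) f is injective; (2) f is an immersion, i.e. its real derivative is injective at every point of ℂ; (3) f is proper, i.e. the preimage of every compact subset of ℝ³ is compact. -/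
open Complex Filter Function
open scoped ComplexConjugate

/-!
The first two coordinates `Re z` and `Re (z²) / 2 = (Re² z - Im² z) / 2` determine `z` up to
complex conjugation, and `‖z‖² = 2 Re² z - Re (z²)` is bounded on the preimage of a bounded set,
which gives properness. Conjugation preserves `Re (z ^ (n+1))` and flips `Im z`, so the last
coordinate separates `z` from `z̄`. The differential is `v ↦ (Re v, Re (z v), Re (zⁿ v) - Im v)`:
on its kernel `v = i t` with `t Im z = 0` and `t (Im zⁿ + 1) = 0`, and `Im z = 0` forces
`Im zⁿ = 0`, hence `t = 0`.
-/

noncomputable def sphereMap (n : ℕ) (z : ℂ) : ℝ × ℝ × ℝ :=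
  (z.re, (z ^ 2).re / 2, (z ^ (n + 1)).re / ((n : ℝ) + 1) - z.im)

noncomputable def sphereMapDeriv (n : ℕ) (z : ℂ) : ℂ →L[ℝ] ℝ × ℝ × ℝ :=
  reCLM.prod ((reCLM.comp (z • (1 : ℂ →L[ℝ] ℂ))).prod
    (reCLM.comp (z ^ n • (1 : ℂ →L[ℝ] ℂ)) - imCLM))

@[simp]
lemma sphereMapDeriv_apply (n : ℕ) (z v : ℂ) :
    sphereMapDeriv n z v = (v.re, (z * v).re, (z ^ n * v).re - v.im) := by
  simp [sphereMapDeriv]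

lemma Complex.eq_or_eq_conj_of_re_eq_of_sq_re_eq {z w : ℂ} (hre : z.re = w.re)
    (hsq : (z ^ 2).re = (w ^ 2).re) : w = z ∨ w = conj z := by
  have him : w.im * w.im = z.im * z.im := by
    simp only [sq, mul_re] at hsq
    rw [hre] at hsq
    linarith
  rcases mul_self_eq_mul_self_iff.mp him with h | h
  · exact .inl (Complex.ext hre.symm h)
  · exact .inr (Complex.ext (by simp [hre]) (by simp [h]))

theorem injective_sphereMap (n : ℕ) : Injective (sphereMap n) := by
  intro z w h
  simp only [sphereMap, Prod.mk.injEq] at h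
  obtain ⟨hre, hsq, hlast⟩ := h
  rcases eq_or_eq_conj_of_re_eq_of_sq_re_eq hre (by linarith) with rfl | rfl
  · rfl
  · have hpow : ((conj z) ^ (n + 1)).re = (z ^ (n + 1)).re := by rw [← map_pow, conj_re]
    rw [hpow, conj_im] at hlast
    exact Complex.ext hre.symm (by rw [conj_im]; linarith)

lemma hasFDerivAt_re_pow_div (m : ℕ) (z : ℂ) :
    HasFDerivAt (fun w : ℂ => (w ^ (m + 1)).re / ((m : ℝ) + 1))
      (reCLM.comp (z ^ m • (1 : ℂ →L[ℝ] ℂ))) z := by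
  have h : HasDerivAt (fun w : ℂ => w ^ (m + 1) / ((m + 1 : ℕ) : ℂ)) (z ^ m) z :=
    ((hasDerivAt_pow (m + 1) z).div_const _).congr_deriv <| by
      rw [Nat.add_sub_cancel, mul_div_cancel_left₀ _ (Nat.cast_ne_zero.2 m.succ_ne_zero)]
  refine (reCLM.hasFDerivAt.comp z h.complexToReal_fderiv).congr_of_eventuallyEq
    (Eventually.of_forall fun w => ?_)
  simp only [comp_apply, reCLM_apply]
  rw [div_natCast_re, Nat.cast_succ]

theorem hasFDerivAt_sphereMap (n : ℕ) (z : ℂ) :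
    HasFDerivAt (sphereMap n) (sphereMapDeriv n z) z := by
  have hsq : HasFDerivAt (fun w : ℂ => (w ^ 2).re / 2) (reCLM.comp (z • (1 : ℂ →L[ℝ] ℂ))) z := by
    simpa [one_add_one_eq_two] using hasFDerivAt_re_pow_div 1 z
  exact reCLM.hasFDerivAt.prodMk (hsq.prodMk ((hasFDerivAt_re_pow_div n z).sub imCLM.hasFDerivAt))

theorem injective_sphereMapDeriv (n : ℕ) (z : ℂ) : Injective (sphereMapDeriv n z) := by
  refine (injective_iff_map_eq_zero _).2 fun v hv => ?_
  simp only [sphereMapDeriv_apply, Prod.mk_eq_zero] at hv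
  obtain ⟨hre, hmid, hlast⟩ := hv
  refine Complex.ext hre ?_
  rw [mul_re, hre, mul_zero, zero_sub, neg_eq_zero, mul_eq_zero] at hmid
  rw [mul_re, hre, mul_zero, zero_sub] at hlast
  rcases hmid with hz | hvim
  · obtain ⟨x, rfl⟩ : ∃ x : ℝ, (x : ℂ) = z := ⟨z.re, Complex.ext rfl hz.symm⟩
    rwa [← ofReal_pow, ofReal_im, zero_mul, neg_zero, zero_sub, neg_eq_zero] at hlast
  · exact hvim

lemma norm_le_two_mul_norm_sphereMap_add_one (n : ℕ) (z : ℂ) :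
    ‖z‖ ≤ 2 * ‖sphereMap n z‖ + 1 := by
  set a := ‖sphereMap n z‖
  have hre : |z.re| ≤ a := norm_fst_le (sphereMap n z)
  have hsq : |(z ^ 2).re / 2| ≤ a := (norm_fst_le _).trans (norm_snd_le (sphereMap n z))
  have hnorm : ‖z‖ ^ 2 = 2 * z.re ^ 2 - 2 * ((z ^ 2).re / 2) := by
    rw [Complex.sq_norm, normSq_apply, pow_two z, mul_re]
    ring
  have : ‖z‖ ^ 2 ≤ (2 * a + 1) ^ 2 := by
    rw [hnorm]
    nlinarith [sq_abs z.re, abs_nonneg z.re, neg_abs_le ((z ^ 2).re / 2)]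
  exact (pow_le_pow_iff_left₀ (norm_nonneg z) (by positivity) two_ne_zero).1 this

theorem isProperMap_sphereMap (n : ℕ) : IsProperMap (sphereMap n) := by
  refine isProperMap_iff_tendsto_cocompact.mpr ⟨by unfold sphereMap; fun_prop, ?_⟩
  rw [← Metric.cobounded_eq_cocompact, ← Metric.cobounded_eq_cocompact,
    ← tendsto_norm_atTop_iff_cobounded]
  refine tendsto_atTop_mono (fun z => ?_)
    ((tendsto_norm_cobounded_atTop.atTop_add (tendsto_const_nhds (x := (-1 : ℝ)))).atTop_div_const
      two_pos)
  linarith [norm_le_two_mul_norm_sphereMap_add_one n z]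

theorem stmt_5_general (n : ℕ) (f : ℂ → ℝ × ℝ × ℝ)
    (hf : ∀ z, f z =
      (z.re, (z ^ 2).re / 2, (z ^ (n + 1)).re / ((n : ℝ) + 1) - z.im)) :
    Function.Injective f ∧
    (∀ z : ℂ, Function.Injective (fderiv ℝ f z)) ∧
    (∀ K : Set (ℝ × ℝ × ℝ), IsCompact K → IsCompact (f ⁻¹' K)) := by
  obtain rfl : f = sphereMap n := funext hf
  exact ⟨injective_sphereMap n,
    fun z => (hasFDerivAt_sphereMap n z).fderiv ▸ injective_sphereMapDeriv n z,
    fun K hK => (isProperMap_sphereMap n).isCompact_preimage hK⟩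

/-- The embedded sphere with a single end of type `(2,3,n+1)`:
`f(z) = (Re z, Re(z²)/2, Re(z^{n+1})/(n+1) - Im z)` is injective, an
immersion, and proper on `ℂ`. -/
theorem stmt_5 (n : ℕ) (hn : 2 ≤ n) (f : ℂ → ℝ × ℝ × ℝ)
    (hf : ∀ z, f z =
      (z.re, (z ^ 2).re / 2, (z ^ (n + 1)).re / ((n : ℝ) + 1) - z.im)) :
    Function.Injective f ∧
    (∀ z : ℂ, Function.Injective (fderiv ℝ f z)) ∧
    (∀ K : Set (ℝ × ℝ × ℝ), IsCompact K → IsCompact (f ⁻¹' K)) :=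
  stmt_5_general n f hf
end

section
/- Let n ≥ 1 be an integer and define f : ℂ → ℝ³ by f(z) = (−Im z, −(Re z)(Im z), Re(z^{2n+1})/(2n+1) + Re z). Equivalently, writing z = x+iy, f(x,y) = (−y, −xy, (x²+y²)^{n+1/2} cos((2n+1)·arctan(y/x))/(2n+1) + x). Then: (1) f is injective; (2) f is an immersion, i.e. its real derivative is injective at every point of ℂ; (3) f is proper, i.e. the preimage of every compact subset of ℝ³ is compact. -/
/-!
The first coordinate recovers `Im z`, and the second then recovers `Re z` unless `Im z = 0`; on
the real axis the third coordinate is the strictly increasing function `x ↦ x ^ m / m + x`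
(`m = 2n+1` odd). The kernel of the derivative is handled the same way, using that
`Re (z ^ (m-1)) + 1 > 0` on the real axis since `m - 1` is even.

Properness follows from the linear bound `‖z‖ ≤ C ‖f z‖`. When `|Re z| ≥ m 2^(m-1) |Im z|`, the
mean value bound `‖z ^ m - (Re z) ^ m‖ ≤ m (2 |Re z|) ^ (m-1) |Im z| ≤ |Re z| ^ m` shows that the
third coordinate is at least `|Re z|` in absolute value, as it is on the real axis.
-/

open Complex Function

theorem norm_pow_sub_pow_le {𝕜 : Type*} [RCLike 𝕜] {x y : 𝕜} {M : ℝ} (m : ℕ)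
    (hx : ‖x‖ ≤ M) (hy : ‖y‖ ≤ M) : ‖x ^ m - y ^ m‖ ≤ m * M ^ (m - 1) * ‖x - y‖ := by
  refine (convex_closedBall (0 : 𝕜) M).norm_image_sub_le_of_norm_deriv_le
    (f := fun w => w ^ m) (fun w _ => differentiableAt_pow m) (fun w hw => ?_)
    (mem_closedBall_zero_iff.2 hy) (mem_closedBall_zero_iff.2 hx)
  rw [(hasDerivAt_pow m w).deriv, norm_mul, norm_pow, RCLike.norm_natCast]
  gcongr
  exact mem_closedBall_zero_iff.1 hw

noncomputable section

namespace SphereEnd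

variable {m : ℕ}

def height (m : ℕ) (z : ℂ) : ℝ := (z ^ m).re / m + z.re

def map (m : ℕ) (z : ℂ) : ℝ × ℝ × ℝ := (-z.im, -(z.re * z.im), height m z)

theorem height_ofReal (m : ℕ) (x : ℝ) : height m x = x ^ m / m + x := by
  simp [height, ← ofReal_pow]

theorem strictMono_height_ofReal (hm : Odd m) : StrictMono fun x : ℝ => height m x := by
  simp only [height_ofReal]
  exact (hm.strictMono_pow.div_const (by exact_mod_cast hm.pos)).add strictMono_id

theorem abs_height_ofReal (hm : Odd m) (x : ℝ) : |height m x| = |x| ^ m / m + |x| := by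
  rw [height_ofReal, (abs_add_eq_add_abs_iff _ _).2, abs_div, abs_pow, Nat.abs_cast]
  rcases le_total 0 x with hx | hx
  · exact .inl ⟨by positivity, hx⟩
  · exact .inr ⟨div_nonpos_of_nonpos_of_nonneg (hm.pow_nonpos hx) m.cast_nonneg, hx⟩

theorem injective_map (hm : Odd m) : Injective (map m) := by
  intro a b hab
  simp only [map, Prod.mk.injEq, neg_inj] at hab
  obtain ⟨him, hreim, hheight⟩ := hab
  refine Complex.ext ?_ him
  rcases eq_or_ne b.im 0 with hb | hb
  · have ha : a = a.re := Complex.ext rfl (by simp [him, hb])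
    have hb' : b = b.re := Complex.ext rfl (by simp [hb])
    rw [ha, hb'] at hheight
    exact (strictMono_height_ofReal hm).injective hheight
  · rw [him] at hreim
    exact mul_right_cancel₀ hb hreim

theorem height_eq_re (m : ℕ) (z : ℂ) : height m z = (z ^ m / m + z).re := by
  simp [height, div_natCast_re]

theorem hasFDerivAt_height (hm : m ≠ 0) (z : ℂ) :
    HasFDerivAt (height m) (reCLM.comp ((z ^ (m - 1) + 1) • (1 : ℂ →L[ℝ] ℂ))) z := by
  have h : HasDerivAt (fun w : ℂ => w ^ m / m + w) (z ^ (m - 1) + 1) z := by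
    refine (((hasDerivAt_pow m z).div_const (m : ℂ)).add (hasDerivAt_id z)).congr_deriv ?_
    rw [mul_div_cancel_left₀ _ (Nat.cast_ne_zero.2 hm : (m : ℂ) ≠ 0)]
  rw [funext (height_eq_re m)]
  exact reCLM.hasFDerivAt.comp z h.complexToReal_fderiv

theorem fderiv_map_apply (hm : m ≠ 0) (z v : ℂ) :
    fderiv ℝ (map m) z v = (-v.im, -(z.re * v.im + z.im * v.re), ((z ^ (m - 1) + 1) * v).re) := by
  have h : HasFDerivAt (map m) _ z := imCLM.hasFDerivAt.neg.prodMk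
    ((reCLM.hasFDerivAt.mul imCLM.hasFDerivAt).neg.prodMk (hasFDerivAt_height hm z))
  rw [h.fderiv]
  simp

theorem injective_fderiv_map (hm : Odd m) (z : ℂ) : Injective (fderiv ℝ (map m) z) := by
  refine (injective_iff_map_eq_zero _).2 fun v hv => ?_
  simp only [fderiv_map_apply (Nat.pos_iff_ne_zero.1 hm.pos), Prod.mk_eq_zero, neg_eq_zero] at hv
  obtain ⟨him, hmix, hheight⟩ := hv
  refine Complex.ext ?_ him
  rw [him, mul_zero, zero_add] at hmix
  rcases eq_or_ne z.im 0 with hz | hz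
  · have hpos : 0 < (z ^ (m - 1) + 1).re := by
      rw [show z = z.re from Complex.ext rfl (by simp [hz]), ← ofReal_pow, add_re, ofReal_re]
      linarith [(hm.tsub_odd odd_one).pow_nonneg z.re, one_re]
    simp only [mul_re, him, mul_zero, sub_zero] at hheight
    exact (mul_eq_zero.1 hheight).resolve_left hpos.ne'
  · exact (mul_eq_zero.1 hmix).resolve_left hz

theorem one_le_mul_two_pow (hm : m ≠ 0) : (1 : ℝ) ≤ m * 2 ^ (m - 1) :=
  one_le_mul_of_one_le_of_one_le (by exact_mod_cast Nat.one_le_iff_ne_zero.2 hm)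
    (one_le_pow₀ one_le_two)

theorem abs_re_le_abs_height (hm : Odd m) {z : ℂ} (hz : m * 2 ^ (m - 1) * |z.im| ≤ |z.re|) :
    |z.re| ≤ |height m z| := by
  set X := |z.re|
  have him : |z.im| ≤ X :=
    (le_mul_of_one_le_left (abs_nonneg _) (one_le_mul_two_pow hm.pos.ne')).trans hz
  have hzX : ‖z‖ ≤ 2 * X := by linarith [norm_le_abs_re_add_abs_im z]
  have hxX : ‖(z.re : ℂ)‖ ≤ 2 * X := by rw [norm_real, Real.norm_eq_abs]; linarith [abs_nonneg z.re]
  have hdiff : |height m z - height m z.re| ≤ X ^ m / m := by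
    have hpow := norm_pow_sub_pow_le m hzX hxX
    have hsub : ‖z - z.re‖ = |z.im| := by
      rw [show z - z.re = z.im * I by apply Complex.ext <;> simp]; simp
    calc |height m z - height m z.re| = |(z ^ m - (z.re : ℂ) ^ m).re| / m := by
          simp [height, sub_re, ← sub_div, abs_div]
      _ ≤ m * (2 * X) ^ (m - 1) * |z.im| / m := by
          gcongr; exact (abs_re_le_norm _).trans (hsub ▸ hpow)
      _ = X ^ (m - 1) * (m * 2 ^ (m - 1) * |z.im|) / m := by rw [mul_pow]; ring
      _ ≤ X ^ (m - 1) * X / m := by gcongr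
      _ = X ^ m / m := by rw [← pow_succ, Nat.sub_add_cancel hm.pos]
  have hreal := abs_height_ofReal hm z.re
  have htri := abs_sub_abs_le_abs_sub (height m z.re) (height m z)
  rw [abs_sub_comm] at htri
  linarith

theorem norm_le_mul_norm_map (hm : Odd m) (z : ℂ) :
    ‖z‖ ≤ (m * 2 ^ (m - 1) + 1) * ‖map m z‖ := by
  have him : |z.im| ≤ ‖map m z‖ := by simp [map]
  have hheight : |height m z| ≤ ‖map m z‖ := by simp [map]
  have hre : |z.re| ≤ m * 2 ^ (m - 1) * ‖map m z‖ := by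
    rcases le_or_gt (m * 2 ^ (m - 1) * |z.im|) |z.re| with h | h
    · calc |z.re| ≤ ‖map m z‖ := (abs_re_le_abs_height hm h).trans hheight
        _ ≤ _ := le_mul_of_one_le_left (norm_nonneg _) (one_le_mul_two_pow hm.pos.ne')
    · exact h.le.trans (by gcongr)
  linarith [norm_le_abs_re_add_abs_im z]

theorem continuous_map (m : ℕ) : Continuous (map m) := by
  unfold map height; fun_prop

theorem isProperMap_map (hm : Odd m) : IsProperMap (map m) := by
  refine isProperMap_iff_isCompact_preimage.2 ⟨continuous_map m, fun K hK => ?_⟩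
  obtain ⟨R, hR⟩ := (Metric.isBounded_iff_subset_closedBall 0).1 hK.isBounded
  refine (isCompact_closedBall (0 : ℂ) ((m * 2 ^ (m - 1) + 1) * R)).of_isClosed_subset
    (hK.isClosed.preimage (continuous_map m)) fun z hz => ?_
  rw [mem_closedBall_zero_iff]
  exact (norm_le_mul_norm_map hm z).trans (by gcongr; exact mem_closedBall_zero_iff.1 (hR hz))

end SphereEnd

end

open SphereEnd in
theorem stmt_6_general (n : ℕ) (f : ℂ → ℝ × ℝ × ℝ)
    (hf : ∀ z, f z =
      (-z.im, -(z.re * z.im), (z ^ (2 * n + 1)).re / (2 * (n : ℝ) + 1) + z.re)) :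
    Function.Injective f ∧
    (∀ z : ℂ, Function.Injective (fderiv ℝ f z)) ∧
    (∀ K : Set (ℝ × ℝ × ℝ), IsCompact K → IsCompact (f ⁻¹' K)) := by
  have hm : Odd (2 * n + 1) := odd_two_mul_add_one n
  obtain rfl : f = map (2 * n + 1) := funext fun z => by
    rw [hf, map, height]
    push_cast
    rfl
  exact ⟨injective_map hm, injective_fderiv_map hm,
    fun K hK => (isProperMap_map hm).isCompact_preimage hK⟩

/-- The embedded sphere with a single end of type `(2,3,2n+1)`:
`f(z) = (-Im z, -(Re z)(Im z), Re(z^{2n+1})/(2n+1) + Re z)` is injective, an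
immersion, and proper on `ℂ`. -/
theorem stmt_6 (n : ℕ) (hn : 1 ≤ n) (f : ℂ → ℝ × ℝ × ℝ)
    (hf : ∀ z, f z =
      (-z.im, -(z.re * z.im), (z ^ (2 * n + 1)).re / (2 * (n : ℝ) + 1) + z.re)) :
    Function.Injective f ∧
    (∀ z : ℂ, Function.Injective (fderiv ℝ f z)) ∧
    (∀ K : Set (ℝ × ℝ × ℝ), IsCompact K → IsCompact (f ⁻¹' K)) :=
  stmt_6_general n f hf
end

section
/- Let n ≥ 2 be an integer and define f : ℂ → ℝ³ by f(z) = (Re z, Re(z³)/3, Re(z^{2n+1})/(2n+1) − Im z); equivalently, f(x,y) = (x, x(x²−3y²)/3, (x²+y²)^{n+1/2} cos((2n+1)·arctan(y/x))/(2n+1) − y). Then f is injective and an immersion (its real derivative is injective at every point), but f is NOT proper: there is a sequence (z_k) in ℂ with |z_k| → ∞ (namely z_k = (−1)ⁿ y_k^{−(2n−1)} + i y_k with y_k → ∞) such that the sequence (f(z_k)) is bounded in ℝ³. -/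
/-!
The first two coordinates of `f` determine `Re z` and `Re z · (Im z)²`, hence `Im z` up to sign
unless `Re z = 0`. In both ambiguous cases (conjugate points, purely imaginary points) the odd
power `z^{2n+1}` has the same real part, so the third coordinate recovers `Im z`.

The differential is `u ↦ (Re u, Re (z² u), Re (z^{2n} u) - Im u)`. A kernel vector is `u = i t`
with `t · Im (z²) = 0`; if `t ≠ 0` then `z²`, hence `z^{2n}`, is real and the last coordinate
is `-t`.

Along `z = x + i y` with `x = (-1)ⁿ y^{-(2n-1)}`, the linear term of the binomial expansion of
`(i y + x)^{2n+1}` in `x` has real part `(2n+1) y`, which cancels `-Im z`; the remaining terms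
are bounded by `2^{2n+1} x² y^{2n-1} = 2^{2n+1} |x|`.
-/

open Complex Filter Function ComplexConjugate

lemma add_pow_succ_sub_sub {R : Type*} [CommRing R] (a b : R) (m : ℕ) :
    (a + b) ^ (m + 1) - a ^ (m + 1) - (m + 1 : ℕ) * a ^ m * b =
      ∑ k ∈ Finset.range m, b ^ (k + 2) * a ^ (m - 1 - k) * ((m + 1).choose (k + 2) : R) := by
  rw [add_comm a b, add_pow, Finset.sum_range_succ', Finset.sum_range_succ']
  simp only [Nat.choose_zero_right, Nat.choose_one_right, Nat.cast_one, pow_zero, one_mul,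
    mul_one, zero_add, pow_one, Nat.sub_zero, Nat.add_sub_cancel]
  have hsummand : ∀ k ∈ Finset.range m,
      b ^ (k + 1 + 1) * a ^ (m + 1 - (k + 1 + 1)) * ((m + 1).choose (k + 1 + 1) : R) =
        b ^ (k + 2) * a ^ (m - 1 - k) * ((m + 1).choose (k + 2) : R) := fun k _ => by
    rw [show m + 1 - (k + 1 + 1) = m - 1 - k by omega]
  rw [Finset.sum_congr rfl hsummand]
  ring

lemma Nat.sum_range_choose_add_two_le (m : ℕ) :
    ∑ k ∈ Finset.range m, (m + 1).choose (k + 2) ≤ 2 ^ (m + 1) :=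
  calc ∑ k ∈ Finset.range m, (m + 1).choose (k + 2)
      ≤ ∑ k ∈ Finset.range m, (m + 1).choose (k + 2) + (m + 1).choose 1 + (m + 1).choose 0 := by
        omega
    _ = 2 ^ (m + 1) := by
        rw [← Nat.sum_range_choose, Finset.sum_range_succ' _ (m + 1), Finset.sum_range_succ']

lemma norm_add_pow_sub_sub_le {𝕜 : Type*} [NormedField 𝕜] {a b : 𝕜} (hab : ‖b‖ ≤ ‖a‖) (m : ℕ) :
    ‖(a + b) ^ m - a ^ m - m * a ^ (m - 1) * b‖ ≤ 2 ^ m * ‖b‖ ^ 2 * ‖a‖ ^ (m - 2) := by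
  rcases m with _ | m
  · simp
  have hterm : ∀ k ∈ Finset.range m,
      ‖b ^ (k + 2) * a ^ (m - 1 - k)‖ ≤ ‖b‖ ^ 2 * ‖a‖ ^ (m - 1) := by
    intro k hk
    have hk : k ≤ m - 1 := by have := Finset.mem_range.1 hk; omega
    calc ‖b ^ (k + 2) * a ^ (m - 1 - k)‖ = ‖b‖ ^ 2 * (‖b‖ ^ k * ‖a‖ ^ (m - 1 - k)) := by
          rw [norm_mul, norm_pow, norm_pow]; ring
      _ ≤ ‖b‖ ^ 2 * (‖a‖ ^ k * ‖a‖ ^ (m - 1 - k)) := by gcongr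
      _ = ‖b‖ ^ 2 * ‖a‖ ^ (m - 1) := by rw [← pow_add, Nat.add_sub_cancel' hk]
  have hchoose : ∑ k ∈ Finset.range m, ((m + 1).choose (k + 2) : ℝ) ≤ 2 ^ (m + 1) := by
    exact_mod_cast Nat.sum_range_choose_add_two_le m
  rw [Nat.add_sub_cancel, add_pow_succ_sub_sub, show m + 1 - 2 = m - 1 by omega]
  calc ‖∑ k ∈ Finset.range m, b ^ (k + 2) * a ^ (m - 1 - k) * ((m + 1).choose (k + 2) : 𝕜)‖
      ≤ ∑ k ∈ Finset.range m, ‖b ^ (k + 2) * a ^ (m - 1 - k)‖ * ((m + 1).choose (k + 2) : ℝ) := by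
        refine (norm_sum_le _ _).trans (Finset.sum_le_sum fun k _ => ?_)
        rw [norm_mul]
        gcongr
        simpa using Nat.norm_cast_le (α := 𝕜) _
    _ ≤ ∑ k ∈ Finset.range m, ‖b‖ ^ 2 * ‖a‖ ^ (m - 1) * ((m + 1).choose (k + 2) : ℝ) :=
        Finset.sum_le_sum fun k hk => by gcongr; exact hterm k hk
    _ = ‖b‖ ^ 2 * ‖a‖ ^ (m - 1) * ∑ k ∈ Finset.range m, ((m + 1).choose (k + 2) : ℝ) := by
        rw [Finset.mul_sum]
    _ ≤ ‖b‖ ^ 2 * ‖a‖ ^ (m - 1) * 2 ^ (m + 1) := by gcongr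
    _ = 2 ^ (m + 1) * ‖b‖ ^ 2 * ‖a‖ ^ (m - 1) := by ring

namespace Complex

lemma re_cube (z : ℂ) : (z ^ 3).re = z.re ^ 3 - 3 * z.re * z.im ^ 2 := by
  simp only [pow_succ, pow_zero, one_mul, mul_re, mul_im]
  ring

lemma re_pow_eq_zero_of_re_eq_zero {z : ℂ} (hz : z.re = 0) {m : ℕ} (hm : Odd m) :
    (z ^ m).re = 0 := by
  have hconj : conj z = -z := Complex.ext (by simp [hz]) (by simp)
  have : (z ^ m).re = -(z ^ m).re := by
    conv_lhs => rw [← conj_re, map_pow, hconj, hm.neg_pow, neg_re]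
  linarith

lemma im_pow_mul_eq_zero_of_im_pow_eq_zero {z : ℂ} {m : ℕ} (hz : (z ^ m).im = 0) (k : ℕ) :
    (z ^ (m * k)).im = 0 := by
  rw [← conj_eq_iff_im] at hz ⊢
  rw [pow_mul, map_pow, hz]

lemma re_pow_eq_of_re_eq_of_re_cube_eq {v w : ℂ} (hre : v.re = w.re)
    (hcube : (v ^ 3).re = (w ^ 3).re) {m : ℕ} (hm : Odd m) : (v ^ m).re = (w ^ m).re := by
  rw [re_cube, re_cube, hre] at hcube
  have hfactor : w.re * ((v.im - w.im) * (v.im + w.im)) = 0 := by linear_combination hcube / (-3)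
  rcases mul_eq_zero.1 hfactor with h0 | hfactor
  · rw [re_pow_eq_zero_of_re_eq_zero (hre.trans h0) hm, re_pow_eq_zero_of_re_eq_zero h0 hm]
  rcases mul_eq_zero.1 hfactor with him | him
  · rw [Complex.ext hre (sub_eq_zero.1 him)]
  · have hconj : w = conj v := Complex.ext (by simp [hre]) (by simp; linarith)
    rw [hconj, ← map_pow, conj_re]

lemma hasFDerivAt_re_pow_div (m : ℕ) (z : ℂ) (hm : m ≠ 0) :
    HasFDerivAt (fun w : ℂ => (w ^ m).re / m)
      (reCLM ∘L ContinuousLinearMap.mul ℝ ℂ (z ^ (m - 1))) z := by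
  have hpow : HasDerivAt (fun w : ℂ => w ^ m / m) (z ^ (m - 1)) z := by
    simpa [hm] using (hasDerivAt_pow m z).div_const (m : ℂ)
  have hfun : (fun w : ℂ => (w ^ m).re / m) = reCLM ∘ fun w => w ^ m / m := by
    ext w
    simp
  rw [hfun]
  exact (reCLM.hasFDerivAt.comp z (hpow.hasFDerivAt.restrictScalars ℝ)).congr_fderiv
    (by ext u; simp [mul_comm])

lemma eq_zero_of_re_eq_zero_of_re_mul_eq_zero {z u : ℂ} (k : ℕ) (h1 : u.re = 0)
    (h2 : (z ^ 2 * u).re = 0) (h3 : (z ^ (2 * k) * u).re = u.im) : u = 0 := by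
  simp only [mul_re, h1, mul_zero, zero_sub, neg_eq_zero] at h2 h3
  suffices u.im = 0 from Complex.ext h1 this
  rcases mul_eq_zero.1 h2 with hz | hu
  · rw [im_pow_mul_eq_zero_of_im_pow_eq_zero hz] at h3
    linarith
  · exact hu

end Complex

noncomputable def endMap (n : ℕ) (z : ℂ) : ℝ × ℝ × ℝ :=
  (z.re, (z ^ 3).re / 3, (z ^ (2 * n + 1)).re / (2 * (n : ℝ) + 1) - z.im)

namespace endMap

variable (n : ℕ)

theorem injective : Injective (endMap n) := by
  intro v w h
  simp only [endMap, Prod.mk.injEq] at h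
  obtain ⟨hre, hcube, hlast⟩ := h
  have hpow := re_pow_eq_of_re_eq_of_re_cube_eq hre (by linarith) (odd_two_mul_add_one n)
  exact Complex.ext hre (by rw [hpow] at hlast; linarith)

theorem hasFDerivAt (z : ℂ) :
    HasFDerivAt (endMap n) (reCLM.prod ((reCLM ∘L ContinuousLinearMap.mul ℝ ℂ (z ^ 2)).prod
      (reCLM ∘L ContinuousLinearMap.mul ℝ ℂ (z ^ (2 * n)) - imCLM))) z := by
  have h3 := hasFDerivAt_re_pow_div 3 z (by norm_num)
  have hm := hasFDerivAt_re_pow_div (2 * n + 1) z (by omega)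
  push_cast at h3 hm
  exact reCLM.hasFDerivAt.prodMk (h3.prodMk (hm.sub imCLM.hasFDerivAt))

theorem fderiv_injective (z : ℂ) : Injective (fderiv ℝ (endMap n) z) := by
  rw [(hasFDerivAt n z).fderiv, injective_iff_map_eq_zero]
  intro u hu
  simp only [ContinuousLinearMap.prod_apply, ContinuousLinearMap.comp_apply,
    sub_apply, ContinuousLinearMap.mul_apply', reCLM_apply, imCLM_apply,
    Prod.mk_eq_zero, sub_eq_zero] at hu
  exact eq_zero_of_re_eq_zero_of_re_mul_eq_zero n hu.1 hu.2.1 hu.2.2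

end endMap

lemma neg_one_pow_mul_mul_pow_eq (n : ℕ) {y : ℝ} (hy : y ≠ 0) :
    (-1) ^ n * ((-1) ^ n * y ^ (-(2 * (n : ℤ) - 1))) * y ^ (2 * n) = y := by
  rw [← mul_assoc, ← pow_add, ← two_mul, pow_mul, neg_one_sq, one_pow, one_mul,
    ← zpow_natCast, ← zpow_add₀ hy]
  push_cast
  ring_nf
  exact zpow_one y

section curve

variable {n : ℕ} {x y : ℝ}

lemma abs_mul_pow_eq (hy : 0 ≤ y) (hxy : (-1) ^ n * x * y ^ (2 * n) = y) :
    |x| * y ^ (2 * n) = y := by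
  simpa [abs_mul, abs_of_nonneg hy] using congrArg abs hxy

lemma abs_mul_pow_le_one (hy : 1 ≤ y) (hxy : |x| * y ^ (2 * n) = y) {k : ℕ} (hk : k < 2 * n) :
    |x| * y ^ k ≤ 1 := by
  have hsplit : y ^ k * y ^ (2 * n - k) = y ^ (2 * n) := by
    rw [← pow_add, Nat.add_sub_cancel' hk.le]
  have hle : y ≤ y ^ (2 * n - k) := le_self_pow₀ hy (by omega)
  have hpos : 0 < y ^ (2 * n - k) := by positivity
  have : |x| * y ^ k * y ^ (2 * n - k) ≤ 1 * y ^ (2 * n - k) := by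
    rw [mul_assoc, hsplit, hxy, one_mul]
    exact hle
  exact le_of_mul_le_mul_right this hpos

lemma abs_re_pow_sub_le (hn : 1 ≤ n) (hy : 1 ≤ y) (hxy : (-1) ^ n * x * y ^ (2 * n) = y) :
    |((x + y * I) ^ (2 * n + 1)).re - (2 * n + 1) * y| ≤ 2 ^ (2 * n + 1) := by
  have habs := abs_mul_pow_eq (by linarith) hxy
  have hx : |x| ≤ 1 := by simpa using abs_mul_pow_le_one (k := 0) hy habs (by omega)
  have hsmall : ‖(x : ℂ)‖ ≤ ‖(y : ℂ) * I‖ := by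
    simp only [norm_real, norm_mul, norm_I, mul_one, Real.norm_eq_abs,
      abs_of_pos (by linarith : 0 < y)]
    linarith
  have hlinear :
      ((2 * n + 1 : ℕ) * ((y : ℂ) * I) ^ (2 * n + 1 - 1) * x).re = (2 * n + 1) * y := by
    have hpow : ((y : ℂ) * I) ^ (2 * n) = (((-1) ^ n * y ^ (2 * n) : ℝ) : ℂ) := by
      rw [pow_mul, mul_pow, I_sq]
      push_cast
      ring
    rw [Nat.add_sub_cancel, hpow, ← ofReal_natCast, ← ofReal_mul, ← ofReal_mul, ofReal_re]
    push_cast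
    linear_combination (2 * (n : ℝ) + 1) * hxy
  have hquadratic : x ^ 2 * y ^ (2 * n + 1 - 2) ≤ 1 := by
    have h := abs_mul_pow_le_one (k := 2 * n + 1 - 2) hy habs (by omega)
    rw [← sq_abs, sq, mul_assoc]
    nlinarith [abs_nonneg x]
  have hR := norm_add_pow_sub_sub_le hsmall (2 * n + 1)
  rw [← hlinear, add_comm]
  calc _ = |((y * I + x) ^ (2 * n + 1) - (y * I) ^ (2 * n + 1)
          - (2 * n + 1 : ℕ) * ((y : ℂ) * I) ^ (2 * n + 1 - 1) * x).re| := by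
        rw [sub_re, sub_re,
          re_pow_eq_zero_of_re_eq_zero (z := y * I) (by simp) (odd_two_mul_add_one n), sub_zero]
    _ ≤ ‖(y * I + x) ^ (2 * n + 1) - (y * I) ^ (2 * n + 1)
          - (2 * n + 1 : ℕ) * ((y : ℂ) * I) ^ (2 * n + 1 - 1) * x‖ := abs_re_le_norm _
    _ ≤ 2 ^ (2 * n + 1) * ‖(x : ℂ)‖ ^ 2 * ‖(y : ℂ) * I‖ ^ (2 * n + 1 - 2) := hR
    _ ≤ 2 ^ (2 * n + 1) := by
        simp only [norm_real, norm_mul, norm_I, mul_one, Real.norm_eq_abs, sq_abs,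
          abs_of_pos (by linarith : 0 < y), mul_assoc]
        exact mul_le_of_le_one_right (by positivity) hquadratic

lemma norm_endMap_le (hn : 2 ≤ n) (hy : 1 ≤ y) (hxy : (-1) ^ n * x * y ^ (2 * n) = y) :
    ‖endMap n (x + y * I)‖ ≤ 2 ^ (2 * n + 1) := by
  have habs := abs_mul_pow_eq (by linarith) hxy
  have hx : |x| ≤ 1 := by simpa using abs_mul_pow_le_one (k := 0) hy habs (by omega)
  have hxy2 : |x| * y ^ 2 ≤ 1 := abs_mul_pow_le_one hy habs (by omega)
  have hfour : (4 : ℝ) ≤ 2 ^ (2 * n + 1) :=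
    calc (4 : ℝ) = 2 ^ 2 := by norm_num
      _ ≤ 2 ^ (2 * n + 1) := pow_le_pow_right₀ (by norm_num) (by omega)
  have hre : (x + y * I : ℂ).re = x := by simp
  have him : (x + y * I : ℂ).im = y := by simp
  simp only [endMap, norm_prod_le_iff, Real.norm_eq_abs, re_cube, hre, him]
  refine ⟨by linarith, ?_, ?_⟩
  · have hcube : |x ^ 3 - 3 * x * y ^ 2| ≤ 4 := by
      calc |x ^ 3 - 3 * x * y ^ 2| ≤ |x| ^ 3 + 3 * (|x| * y ^ 2) := by
            refine (abs_sub _ _).trans_eq ?_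
            rw [abs_pow, abs_mul, abs_mul, abs_of_nonneg (sq_nonneg y),
              abs_of_pos (by norm_num : (0 : ℝ) < 3)]
            ring
        _ ≤ 1 + 3 * 1 := by gcongr; exact pow_le_one₀ (abs_nonneg x) hx
        _ = 4 := by norm_num
    rw [abs_div, abs_of_pos (by norm_num : (0 : ℝ) < 3)]
    linarith
  · have hm : (1 : ℝ) ≤ 2 * n + 1 := by linarith [(Nat.cast_nonneg n : (0 : ℝ) ≤ n)]
    rw [div_sub' (by positivity), abs_div, abs_of_pos (by positivity : (0 : ℝ) < 2 * n + 1)]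
    exact (div_le_self (abs_nonneg _) hm).trans (abs_re_pow_sub_le (by omega) hy hxy)

end curve

/-- The regular embedded end of type `(2,4,2n+1)`:
`f(z) = (Re z, Re(z³)/3, Re(z^{2n+1})/(2n+1) - Im z)` is injective and an
immersion, but not proper: along `z_k = (-1)ⁿ y_k^{-(2n-1)} + i y_k` with
`y_k → ∞` the image stays bounded. -/
theorem stmt_7 (n : ℕ) (hn : 2 ≤ n) (f : ℂ → ℝ × ℝ × ℝ)
    (hf : ∀ z, f z =
      (z.re, (z ^ 3).re / 3, (z ^ (2 * n + 1)).re / (2 * (n : ℝ) + 1) - z.im)) :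
    Function.Injective f ∧
    (∀ z : ℂ, Function.Injective (fderiv ℝ f z)) ∧
    (∃ y : ℕ → ℝ, Tendsto y atTop atTop ∧
      Tendsto
        (fun k => ‖
          ((((-1 : ℝ) ^ n * (y k) ^ (-(2 * (n : ℤ) - 1)) : ℝ) : ℂ)
            + (y k : ℂ) * I)‖) atTop atTop ∧
      ∃ C : ℝ, ∀ k,
        ‖f ((((-1 : ℝ) ^ n * (y k) ^ (-(2 * (n : ℤ) - 1)) : ℝ) : ℂ)
            + (y k : ℂ) * I)‖ ≤ C) := by
  obtain rfl : f = endMap n := funext hf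
  have hy : Tendsto (fun k : ℕ => (k : ℝ) + 1) atTop atTop :=
    tendsto_atTop_add_const_right _ 1 tendsto_natCast_atTop_atTop
  have hy_ge (k : ℕ) : (1 : ℝ) ≤ k + 1 := by linarith [(Nat.cast_nonneg k : (0 : ℝ) ≤ k)]
  refine ⟨endMap.injective n, endMap.fderiv_injective n, fun k => k + 1, hy, ?_,
    2 ^ (2 * n + 1), fun k => norm_endMap_le hn (hy_ge k)
      (neg_one_pow_mul_mul_pow_eq n (by positivity))⟩
  refine tendsto_atTop_mono (fun k => ?_) hy
  calc (k : ℝ) + 1 = |((((-1 : ℝ) ^ n * ((k : ℝ) + 1) ^ (-(2 * (n : ℤ) - 1)) : ℝ) : ℂ)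
        + (((k : ℝ) + 1 : ℝ) : ℂ) * I).im| := by
        simp only [add_im, ofReal_im, im_ofReal_mul, I_im, mul_one, zero_add]
        exact (abs_of_pos (by positivity)).symm
    _ ≤ _ := abs_im_le_norm _
end

section
/- Define f : ℝ² → ℝ³ by f(x,y) = (−y, −x³y + xy³, x + x⁷/7 − 3x⁵y² + 5x³y⁴ − xy⁶). Then: (1) f is injective; (2) f is an immersion, i.e. its real derivative is injective at every point of ℝ²; (3) f is proper, i.e. the preimage of every compact subset of ℝ³ is compact. -/
/-!
With `z = x + iy`, the map is `Re (iz, iz⁴/4, z + z⁷/7)`.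

Injectivity: two points with the same image share `y = c`; equal second coordinates force
`c = 0` or `c² = a² + ab + b²`, and in either case the third coordinates differ by `a - b`
times a positive quantity. Immersion: the first coordinate reads off the `y`-component of a
tangent vector, and the `x`-partial `(-Im z³, 1 + Re z⁶)` of the other two never vanishes,
because `Im z³ = 0` makes `z⁶ = (z³)² ≥ 0`. Properness: for bounded `y` the third coordinate
grows like `x⁷/7`, so bounded images have bounded `x`.
-/

open Function

noncomputable def sphere258 (p : ℝ × ℝ) : ℝ × ℝ × ℝ :=
  (-p.2, -p.1 ^ 3 * p.2 + p.1 * p.2 ^ 3,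
    p.1 + p.1 ^ 7 / 7 - 3 * p.1 ^ 5 * p.2 ^ 2 + 5 * p.1 ^ 3 * p.2 ^ 4 - p.1 * p.2 ^ 6)

theorem strictMono_add_pow_seven_div_seven : StrictMono fun x : ℝ => x + x ^ 7 / 7 :=
  strictMono_id.add ((Odd.strictMono_pow (by decide)).div_const (by norm_num))

theorem sextic_form_nonneg (a b : ℝ) :
    0 ≤ 8 * a ^ 6 + 43 * a ^ 5 * b + 106 * a ^ 4 * b ^ 2 + 134 * a ^ 3 * b ^ 3
      + 106 * a ^ 2 * b ^ 4 + 43 * a * b ^ 5 + 8 * b ^ 6 := by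
  -- squares from an LDLᵀ factorisation of a Gram matrix of the sextic
  nlinarith [sq_nonneg (a ^ 3 + 43 / 16 * a ^ 2 * b + 1 / 4 * a * b ^ 2 - 9 / 16 * b ^ 3),
    sq_nonneg (a ^ 2 * b + 2116 / 1415 * a * b ^ 2 + 451 / 1415 * b ^ 3),
    sq_nonneg (a * b ^ 2 + 1096 / 1851 * b ^ 3), sq_nonneg (b ^ 3)]

theorem sphere258_injective : Injective sphere258 := by
  rintro ⟨a, c⟩ ⟨b, d⟩ h
  simp only [sphere258, Prod.mk.injEq, neg_inj] at h
  obtain ⟨rfl, hg, hh⟩ := h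
  suffices a = b by rw [this]
  have hfactor : c * (a - b) * (c ^ 2 - (a ^ 2 + a * b + b ^ 2)) = 0 := by linear_combination hg
  rcases mul_eq_zero.mp hfactor with hc | hc
  · rcases mul_eq_zero.mp hc with rfl | hab
    · exact strictMono_add_pow_seven_div_seven.injective (by linear_combination hh)
    · exact sub_eq_zero.mp hab
  · have hc2 : c ^ 2 = a ^ 2 + a * b + b ^ 2 := sub_eq_zero.mp hc
    have key : (a - b) * (7 + (8 * a ^ 6 + 43 * a ^ 5 * b + 106 * a ^ 4 * b ^ 2
        + 134 * a ^ 3 * b ^ 3 + 106 * a ^ 2 * b ^ 4 + 43 * a * b ^ 5 + 8 * b ^ 6)) = 0 := by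
      linear_combination 7 * hh
        + (a - b) * (21 * (a ^ 4 + a ^ 3 * b + a ^ 2 * b ^ 2 + a * b ^ 3 + b ^ 4)
          - 35 * (a ^ 2 + a * b + b ^ 2) * (c ^ 2 + (a ^ 2 + a * b + b ^ 2))
          + 7 * (c ^ 4 + c ^ 2 * (a ^ 2 + a * b + b ^ 2) + (a ^ 2 + a * b + b ^ 2) ^ 2)) * hc2
    exact sub_eq_zero.mp ((mul_eq_zero.mp key).resolve_right
      (add_pos_of_pos_of_nonneg (by norm_num) (sextic_form_nonneg a b)).ne')

theorem LinearMap.injective_of_ker_le_ker_snd {𝕜 E : Type*} [Field 𝕜] [AddCommGroup E]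
    [Module 𝕜 E] (L : 𝕜 × 𝕜 →ₗ[𝕜] E) (hsnd : ker L ≤ ker (snd 𝕜 𝕜 𝕜)) (hfst : L (1, 0) ≠ 0) :
    Injective L := by
  refine (injective_iff_map_eq_zero L).mpr fun u hu => ?_
  have hu2 : u.2 = 0 := hsnd hu
  have hu1 : u.1 • L (1, 0) = 0 := by
    rw [← L.map_smul, Prod.smul_mk, smul_eq_mul, mul_one, smul_zero, ← hu2, hu]
  exact Prod.ext ((smul_eq_zero.mp hu1).resolve_right hfst) hu2

theorem differentiable_sphere258 : Differentiable ℝ sphere258 := by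
  unfold sphere258; fun_prop

theorem hasDerivAt_sphere258_partial_fst (x y : ℝ) :
    HasDerivAt (fun t => sphere258 (t, y))
      (0, -3 * x ^ 2 * y + y ^ 3, 1 + x ^ 6 - 15 * x ^ 4 * y ^ 2 + 15 * x ^ 2 * y ^ 4 - y ^ 6)
      x := by
  have hx := hasDerivAt_id' x
  exact (hasDerivAt_const x (-y)).prodMk ((((hasDerivAt_pow 3 x).neg.mul_const y).add
    (hx.mul_const (y ^ 3))).prodMk (((((hx.add ((hasDerivAt_pow 7 x).div_const 7)).sub
      (((hasDerivAt_pow 5 x).const_mul 3).mul_const (y ^ 2))).add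
      (((hasDerivAt_pow 3 x).const_mul 5).mul_const (y ^ 4))).sub
      (hx.mul_const (y ^ 6))))) |>.congr_deriv
        (Prod.ext rfl (Prod.ext (by push_cast; ring) (by push_cast; ring)))

theorem sphere258_partial_fst_ne_zero (x y : ℝ) :
    ((-3 * x ^ 2 * y + y ^ 3, 1 + x ^ 6 - 15 * x ^ 4 * y ^ 2 + 15 * x ^ 2 * y ^ 4 - y ^ 6) :
      ℝ × ℝ) ≠ 0 := by
  intro h
  simp only [Prod.mk_eq_zero] at h
  obtain ⟨him, hre⟩ := h
  have : 1 + (x ^ 3 - 3 * x * y ^ 2) ^ 2 = 0 := by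
    linear_combination hre - (3 * x ^ 2 * y - y ^ 3) * him
  nlinarith [sq_nonneg (x ^ 3 - 3 * x * y ^ 2)]

theorem injective_fderiv_sphere258 (p : ℝ × ℝ) : Injective (fderiv ℝ sphere258 p) := by
  have hD := (differentiable_sphere258 p).hasFDerivAt
  refine LinearMap.injective_of_ker_le_ker_snd (fderiv ℝ sphere258 p : ℝ × ℝ →ₗ[ℝ] ℝ × ℝ × ℝ)
    (fun u hu => show u.2 = 0 from ?_) fun h0 => ?_
  · have hfst : HasFDerivAt (fun q : ℝ × ℝ => (sphere258 q).1)
        (-ContinuousLinearMap.snd ℝ ℝ ℝ) p :=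
      hasFDerivAt_snd.neg
    have := congrArg (fun L => L u) (hD.fst.unique hfst)
    simp only [ContinuousLinearMap.comp_apply, ContinuousLinearMap.coe_fst', neg_apply,
      ContinuousLinearMap.coe_snd'] at this
    rwa [← ContinuousLinearMap.coe_coe, LinearMap.mem_ker.mp hu, Prod.fst_zero, eq_comm,
      neg_eq_zero] at this
  · have hpartial : HasDerivAt (fun t => sphere258 (t, p.2)) (fderiv ℝ sphere258 p (1, 0)) p.1 :=
      HasFDerivAt.comp_hasDerivAt (l := sphere258) p.1 hD
        ((hasDerivAt_id' p.1).prodMk (hasDerivAt_const p.1 p.2))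
    have := (hpartial.unique (hasDerivAt_sphere258_partial_fst p.1 p.2)).symm
    exact sphere258_partial_fst_ne_zero p.1 p.2 (congrArg Prod.snd (this.trans h0))

theorem abs_le_of_abs_sphere258_le {x y R : ℝ} (hy : |y| ≤ R)
    (hz : |(sphere258 (x, y)).2.2| ≤ R) : |x| ≤ 1 + 7 * (R + 3 * R ^ 2 + R ^ 6) := by
  set z := (sphere258 (x, y)).2.2 with hz_def
  have hR : 0 ≤ R := (abs_nonneg y).trans hy
  by_contra! hx
  have hx1 : 1 ≤ |x| := le_of_lt (lt_of_le_of_lt (by linarith [sq_nonneg R, pow_nonneg hR 6]) hx)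
  have habs : |x| ≤ x ^ 2 := by nlinarith [sq_abs x]
  have hx2 : x ^ 2 ≤ x ^ 6 := by nlinarith [sq_abs x, pow_nonneg (sq_nonneg x) 2]
  have hy2 : y ^ 2 ≤ R ^ 2 := sq_le_sq' (abs_le.mp hy).1 (abs_le.mp hy).2
  have hy6 : y ^ 6 ≤ R ^ 6 := by
    simpa [Even.pow_abs (by decide : Even 6)] using pow_le_pow_left₀ (abs_nonneg y) hy 6
  have upper : x * z ≤ x ^ 2 * R :=
    calc x * z ≤ |x| * |z| := by rw [← abs_mul]; exact le_abs_self _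
      _ ≤ x ^ 2 * R := mul_le_mul habs hz (abs_nonneg z) (sq_nonneg x)
  have lower : x ^ 8 / 7 - 3 * x ^ 6 * R ^ 2 - x ^ 2 * R ^ 6 ≤ x * z := by
    have : x * z = x ^ 2 + x ^ 8 / 7 - 3 * x ^ 6 * y ^ 2 + 5 * x ^ 4 * y ^ 4 - x ^ 2 * y ^ 6 := by
      simp only [hz_def, sphere258]; ring
    rw [this]
    nlinarith [mul_le_mul_of_nonneg_left hy2 (pow_nonneg (sq_nonneg x) 3),
      mul_le_mul_of_nonneg_left hy6 (sq_nonneg x), sq_nonneg (x ^ 2 * y ^ 2)]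
  have hsix : x ^ 6 * x ^ 2 ≤ x ^ 6 * (7 * (R + 3 * R ^ 2 + R ^ 6)) := by
    nlinarith [mul_le_mul_of_nonneg_left hx2 hR, mul_le_mul_of_nonneg_left hx2 (pow_nonneg hR 6)]
  linarith [le_of_mul_le_mul_left hsix (by linarith)]

theorem isCompact_preimage_sphere258 {K : Set (ℝ × ℝ × ℝ)} (hK : IsCompact K) :
    IsCompact (sphere258 ⁻¹' K) := by
  obtain ⟨R, hKR⟩ := hK.isBounded.subset_closedBall 0
  refine Metric.isCompact_iff_isClosed_bounded.mpr
    ⟨hK.isClosed.preimage differentiable_sphere258.continuous,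
      (Metric.isBounded_closedBall (x := 0) (r := 1 + 7 * (R + 3 * R ^ 2 + R ^ 6))).subset ?_⟩
  rintro ⟨x, y⟩ hp
  have hfR : ‖sphere258 (x, y)‖ ≤ R := mem_closedBall_zero_iff.mp (hKR hp)
  have hy : |y| ≤ R := by simpa [sphere258] using (norm_fst_le _).trans hfR
  have hz : |(sphere258 (x, y)).2.2| ≤ R := ((norm_snd_le _).trans (norm_snd_le _)).trans hfR
  have hR : 0 ≤ R := (abs_nonneg y).trans hy
  rw [mem_closedBall_zero_iff, Prod.norm_mk, Real.norm_eq_abs, Real.norm_eq_abs]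
  exact max_le (abs_le_of_abs_sphere258_le hy hz) (by linarith [sq_nonneg R, pow_nonneg hR 6])

/-- The embedded sphere with a single end of type `(2,5,8)`:
`f(x,y) = (-y, -x³y + xy³, x + x⁷/7 - 3x⁵y² + 5x³y⁴ - xy⁶)` is injective, an
immersion, and proper. -/
theorem stmt_8 (f : ℝ × ℝ → ℝ × ℝ × ℝ)
    (hf : ∀ x y : ℝ, f (x, y) =
      (-y, -x ^ 3 * y + x * y ^ 3,
        x + x ^ 7 / 7 - 3 * x ^ 5 * y ^ 2 + 5 * x ^ 3 * y ^ 4 - x * y ^ 6)) :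
    Function.Injective f ∧
    (∀ p : ℝ × ℝ, Function.Injective (fderiv ℝ f p)) ∧
    (∀ K : Set (ℝ × ℝ × ℝ), IsCompact K → IsCompact (f ⁻¹' K)) := by
  obtain rfl : f = sphere258 := funext fun p => hf p.1 p.2
  exact ⟨sphere258_injective, injective_fderiv_sphere258, fun _ => isCompact_preimage_sphere258⟩
end

section
/- Define f : ℝ² → ℝ³ by f(x,y) = (xy, x(3/2 + x² − 3y²), y(5x⁴ − 10x²y² + y⁴ + 5)). Then: (1) f is injective; (2) f is an immersion, i.e. its real derivative is injective at every point of ℝ²; (3) f is proper, i.e. the preimage of every compact subset of ℝ³ is compact. -/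
/-!
Off the coordinate axes write `u = xy`. A collision `f(x₁,y₁) = f(x₂,y₂)` with `x₁x₂ > 0`
forces `x₁ = x₂`, because the difference of the second coordinates factors as `(x₁ - x₂)` times a
positive form. For `x₁ > 0 > x₂ = -b` the second coordinate gives
`3u² = x₁b(x₁² - x₁b + b² + 3/2)`; substituting this into the third coordinate leaves
`(x₁ + b)(x₁b)²·Φ = 0` with `Φ > 0`. On the axes `f` restricts to the strictly increasing odd
maps `t ↦ t(3/2 + t²)` and `t ↦ t(t⁴ + 5)`.

The minor of the Jacobian formed by the first two coordinates is `-x(3/2 + 3x² + 3y²)`, and on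
`x = 0` the third coordinate takes over. Properness comes from the coercive estimates
`|y|⁵ ≤ |f₃| + 10 f₁² |y|` and `|x|³ ≤ |f₂| + 3 |f₁| |y|`.
-/

open Function

noncomputable def surface346 (p : ℝ × ℝ) : ℝ × ℝ × ℝ :=
  (p.1 * p.2, p.1 * (3 / 2 + p.1 ^ 2 - 3 * p.2 ^ 2),
    p.2 * (5 * p.1 ^ 4 - 10 * p.1 ^ 2 * p.2 ^ 2 + p.2 ^ 4 + 5))

theorem cubic_injective : Injective fun t : ℝ => t * (3 / 2 + t ^ 2) := by
  intro a b h
  have key : (a - b) * (3 / 2 + a ^ 2 + a * b + b ^ 2) = 0 := by linear_combination h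
  have pos : 0 < 3 / 2 + a ^ 2 + a * b + b ^ 2 := by nlinarith [sq_nonneg (a + b)]
  exact sub_eq_zero.mp ((mul_eq_zero.mp key).resolve_right pos.ne')

theorem quintic_injective : Injective fun t : ℝ => t * (t ^ 4 + 5) := by
  intro a b h
  have key : (a - b) * (a ^ 4 + a ^ 3 * b + a ^ 2 * b ^ 2 + a * b ^ 3 + b ^ 4 + 5) = 0 := by
    linear_combination h
  have pos : 0 < a ^ 4 + a ^ 3 * b + a ^ 2 * b ^ 2 + a * b ^ 3 + b ^ 4 + 5 := by
    nlinarith [sq_nonneg (a ^ 2 - b ^ 2), sq_nonneg (a ^ 2 + b ^ 2),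
      mul_nonneg (add_nonneg (sq_nonneg a) (sq_nonneg b)) (sq_nonneg (a + b))]
  exact sub_eq_zero.mp ((mul_eq_zero.mp key).resolve_right pos.ne')

theorem eq_of_surface346_eq_of_mul_eq_zero {x₁ y₁ x₂ y₂ : ℝ} (hu : x₁ * y₁ = 0)
    (h : surface346 (x₁, y₁) = surface346 (x₂, y₂)) : (x₁, y₁) = (x₂, y₂) := by
  simp only [surface346, Prod.mk.injEq] at h
  obtain ⟨e₁, e₂, e₃⟩ := h
  have hu₂ : x₂ * y₂ = 0 := e₁ ▸ hu
  refine Prod.ext (cubic_injective ?_) (quintic_injective ?_)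
  · linear_combination e₂ + 3 * y₁ * hu - 3 * y₂ * hu₂
  · linear_combination e₃ - (5 * x₁ ^ 3 - 10 * x₁ * y₁ ^ 2) * hu
      + (5 * x₂ ^ 3 - 10 * x₂ * y₂ ^ 2) * hu₂

theorem eq_of_surface346_eq_of_mul_pos {x₁ y₁ x₂ y₂ : ℝ} (hx : 0 < x₁ * x₂)
    (h : surface346 (x₁, y₁) = surface346 (x₂, y₂)) : (x₁, y₁) = (x₂, y₂) := by
  simp only [surface346, Prod.mk.injEq] at h
  obtain ⟨e₁, e₂, -⟩ := h
  have key :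
      (x₁ - x₂) * (x₁ * x₂ * (3 / 2 + x₁ ^ 2 + x₁ * x₂ + x₂ ^ 2) + 3 * (x₂ * y₂) ^ 2) = 0 := by
    linear_combination x₁ * x₂ * e₂ + 3 * x₂ * (x₁ * y₁ + x₂ * y₂) * e₁
  have pos : 0 < x₁ * x₂ * (3 / 2 + x₁ ^ 2 + x₁ * x₂ + x₂ ^ 2) + 3 * (x₂ * y₂) ^ 2 := by
    have : 0 < 3 / 2 + x₁ ^ 2 + x₁ * x₂ + x₂ ^ 2 := by nlinarith [sq_nonneg (x₁ + x₂)]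
    positivity
  have hx₁ : x₁ = x₂ := sub_eq_zero.mp ((mul_eq_zero.mp key).resolve_right pos.ne')
  subst hx₁
  exact Prod.ext rfl (mul_left_cancel₀ (left_ne_zero_of_mul hx.ne') e₁)

theorem collision_polynomial_pos {p C B : ℝ} (hp : 0 < p) (hC : p ≤ C) (hB : 0 ≤ B) :
    0 < 15 * p ^ 3 * C - 45 * p ^ 3 + 45 * p ^ 2 + (C + 3 / 2) ^ 2 * B := by
  have h₁ : 0 < 15 * p ^ 2 * ((p - 3 / 2) ^ 2 + 3 / 4) := by positivity
  nlinarith [mul_le_mul_of_nonneg_left hC (pow_pos hp 3).le,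
    mul_nonneg (sq_nonneg (C + 3 / 2)) hB]

theorem false_of_collision_relations {a b u : ℝ} (ha : 0 < a) (hb : 0 < b)
    (H₁ : 3 * u ^ 2 = a * b * (a ^ 2 - a * b + b ^ 2 + 3 / 2))
    (H₂ : b ^ 5 * (5 * a ^ 8 - 10 * a ^ 4 * u ^ 2 + u ^ 4 + 5 * a ^ 4)
      + a ^ 5 * (5 * b ^ 8 - 10 * b ^ 4 * u ^ 2 + u ^ 4 + 5 * b ^ 4) = 0) : False := by
  have key : (a + b) * ((a * b) ^ 2 * (15 * (a * b) ^ 3 * (a ^ 2 - a * b + b ^ 2)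
      - 45 * (a * b) ^ 3 + 45 * (a * b) ^ 2 + (a ^ 2 - a * b + b ^ 2 + 3 / 2) ^ 2
        * (a ^ 4 - a ^ 3 * b + a ^ 2 * b ^ 2 - a * b ^ 3 + b ^ 4))) = 0 := by
    linear_combination 9 * H₂ - ((3 * u ^ 2 + a * b * (a ^ 2 - a * b + b ^ 2 + 3 / 2))
      * (a ^ 5 + b ^ 5) - 30 * (a * b) ^ 4 * (a + b)) * H₁
  have hC : a * b ≤ a ^ 2 - a * b + b ^ 2 := by nlinarith [sq_nonneg (a - b)]
  have hB : 0 ≤ a ^ 4 - a ^ 3 * b + a ^ 2 * b ^ 2 - a * b ^ 3 + b ^ 4 := by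
    have : a ^ 4 - a ^ 3 * b + a ^ 2 * b ^ 2 - a * b ^ 3 + b ^ 4
        = (a - b) ^ 2 * ((a + b / 2) ^ 2 + 3 / 4 * b ^ 2) + (a * b) ^ 2 := by ring
    rw [this]
    positivity
  have hΦ := collision_polynomial_pos (mul_pos ha hb) hC hB
  exact (mul_pos (add_pos ha hb) (mul_pos (by positivity) hΦ)).ne' key

theorem surface346_ne_of_pos_of_neg {x₁ y₁ x₂ y₂ : ℝ} (hx₁ : 0 < x₁) (hx₂ : x₂ < 0)
    (hy₁ : y₁ ≠ 0) : surface346 (x₁, y₁) ≠ surface346 (x₂, y₂) := by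
  intro h
  simp only [surface346, Prod.mk.injEq] at h
  obtain ⟨e₁, e₂, e₃⟩ := h
  obtain ⟨b, rfl⟩ : ∃ b, x₂ = -b := ⟨-x₂, (neg_neg x₂).symm⟩
  have hb : 0 < b := neg_lt_zero.mp hx₂
  refine false_of_collision_relations (u := x₁ * y₁) hx₁ hb ?_ ?_
  · refine mul_left_cancel₀ (add_pos hx₁ hb).ne' ?_
    linear_combination (-(x₁ * b)) * e₂ + 3 * x₁ * (x₁ * y₁ - b * y₂) * e₁
  · refine (mul_eq_zero.mp ?_).resolve_left (mul_ne_zero hx₁.ne' hy₁)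
    -- the multiple of `e₁` trades `b * y₂` for `-(x₁ * y₁)` in the odd quintic of the
    -- third coordinate
    linear_combination (x₁ ^ 5 * b ^ 5) * e₃ + x₁ ^ 5 * (5 * b ^ 8 + 5 * b ^ 4
      - 10 * b ^ 4 * ((b * y₂) ^ 2 - b * y₂ * (x₁ * y₁) + (x₁ * y₁) ^ 2)
      + ((b * y₂) ^ 4 - (b * y₂) ^ 3 * (x₁ * y₁) + (b * y₂) ^ 2 * (x₁ * y₁) ^ 2
        - b * y₂ * (x₁ * y₁) ^ 3 + (x₁ * y₁) ^ 4)) * e₁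

theorem surface346_injective : Injective surface346 := by
  rintro ⟨x₁, y₁⟩ ⟨x₂, y₂⟩ h
  by_cases hu : x₁ * y₁ = 0
  · exact eq_of_surface346_eq_of_mul_eq_zero hu h
  have hu₂ : x₂ * y₂ ≠ 0 := by
    have : x₁ * y₁ = x₂ * y₂ := congrArg Prod.fst h
    rwa [← this]
  obtain ⟨hx₁, hy₁⟩ := mul_ne_zero_iff.mp hu
  obtain ⟨hx₂, hy₂⟩ := mul_ne_zero_iff.mp hu₂
  rcases (mul_ne_zero hx₁ hx₂).lt_or_gt with hneg | hpos
  · rcases hx₁.lt_or_gt with h₁ | h₁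
    · exact (surface346_ne_of_pos_of_neg (pos_of_mul_neg_right hneg h₁.le) h₁ hy₂ h.symm).elim
    · exact (surface346_ne_of_pos_of_neg h₁ (neg_of_mul_neg_right hneg h₁.le) hy₁ h).elim
  · exact eq_of_surface346_eq_of_mul_pos hpos h

open ContinuousLinearMap in
noncomputable def surface346Jacobian (x y : ℝ) : ℝ × ℝ →L[ℝ] ℝ × ℝ × ℝ :=
  (y • fst ℝ ℝ ℝ + x • snd ℝ ℝ ℝ).prod
    (((3 / 2 + 3 * x ^ 2 - 3 * y ^ 2) • fst ℝ ℝ ℝ - (6 * x * y) • snd ℝ ℝ ℝ).prod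
      ((20 * x * y * (x ^ 2 - y ^ 2)) • fst ℝ ℝ ℝ
        + (5 * x ^ 4 - 30 * x ^ 2 * y ^ 2 + 5 * y ^ 4 + 5) • snd ℝ ℝ ℝ))

theorem hasFDerivAt_surface346 (x y : ℝ) :
    HasFDerivAt surface346 (surface346Jacobian x y) (x, y) := by
  have hx : HasFDerivAt (fun p : ℝ × ℝ => p.1) (ContinuousLinearMap.fst ℝ ℝ ℝ) (x, y) :=
    hasFDerivAt_fst
  have hy : HasFDerivAt (fun p : ℝ × ℝ => p.2) (ContinuousLinearMap.snd ℝ ℝ ℝ) (x, y) :=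
    hasFDerivAt_snd
  have h₂ :=
    hx.mul (((hasFDerivAt_const (3 / 2 : ℝ) _).add (hx.pow 2)).sub ((hy.pow 2).const_mul 3))
  have h₃ := hy.mul (((((hx.pow 4).const_mul 5).sub (((hx.pow 2).const_mul 10).mul (hy.pow 2))).add
    (hy.pow 4)).add (hasFDerivAt_const (5 : ℝ) _))
  refine ((hx.mul hy).prodMk (h₂.prodMk h₃)).congr_fderiv ?_
  ext <;>
    simp only [surface346Jacobian, ContinuousLinearMap.prod_apply, ContinuousLinearMap.comp_apply,
      ContinuousLinearMap.inl_apply, ContinuousLinearMap.inr_apply, ContinuousLinearMap.coe_fst',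
      ContinuousLinearMap.coe_snd', add_apply, sub_apply, smul_apply, Pi.mul_apply, Pi.add_apply,
      Pi.sub_apply, zero_apply, smul_eq_mul, nsmul_eq_mul, Nat.cast_ofNat] <;>
    ring

theorem surface346Jacobian_injective (x y : ℝ) : Injective (surface346Jacobian x y) := by
  rw [injective_iff_map_eq_zero]
  rintro ⟨a, b⟩ h
  simp only [surface346Jacobian, ContinuousLinearMap.prod_apply, add_apply, sub_apply, smul_apply,
    ContinuousLinearMap.coe_fst', ContinuousLinearMap.coe_snd', smul_eq_mul, Prod.mk_eq_zero] at h
  obtain ⟨e₁, e₂, e₃⟩ := h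
  by_cases hx : x = 0
  · subst hx
    have hb : b = 0 := by
      have : (5 * y ^ 4 + 5) * b = 0 := by linear_combination e₃
      exact (mul_eq_zero.mp this).resolve_left (by positivity)
    subst hb
    have ha : 3 / 2 * a = 0 := by linear_combination e₂ + 3 * y * e₁
    simpa using ha
  · have hM : x * (3 / 2 + 3 * x ^ 2 + 3 * y ^ 2) ≠ 0 := mul_ne_zero hx (by positivity)
    have ha : a * (x * (3 / 2 + 3 * x ^ 2 + 3 * y ^ 2)) = 0 := by
      linear_combination 6 * x * y * e₁ + x * e₂
    have hb : b * (x * (3 / 2 + 3 * x ^ 2 + 3 * y ^ 2)) = 0 := by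
      linear_combination (3 / 2 + 3 * x ^ 2 - 3 * y ^ 2) * e₁ - y * e₂
    simp [(mul_eq_zero.mp ha).resolve_right hM, (mul_eq_zero.mp hb).resolve_right hM]

theorem le_max_one_of_pow_le_add_mul {t A B : ℝ} {n : ℕ} (hn : 2 ≤ n) (hA : 0 ≤ A)
    (h : t ^ n ≤ A + B * t) : t ≤ max 1 (A + B) := by
  rcases le_or_gt t 1 with ht | ht
  · exact le_max_of_le_left ht
  have hsq : t ^ 2 ≤ t ^ n := pow_le_pow_right₀ ht.le hn
  have : t * t ≤ (A + B) * t := by nlinarith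
  exact le_max_of_le_right (le_of_mul_le_mul_right this (by linarith))

theorem abs_pow_five_le_of_norm_surface346_le {x y R : ℝ} (h : ‖surface346 (x, y)‖ ≤ R) :
    |y| ^ 5 ≤ R + 10 * R ^ 2 * |y| := by
  simp only [surface346, norm_prod_le_iff, Real.norm_eq_abs] at h
  obtain ⟨h₁, -, h₃⟩ := h
  have hP : 0 ≤ 5 * x ^ 4 + y ^ 4 + 5 := by positivity
  calc |y| ^ 5 ≤ |y * (5 * x ^ 4 + y ^ 4 + 5)| := by
        rw [abs_mul, abs_of_nonneg hP, pow_succ', Even.pow_abs (by norm_num : Even 4)]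
        gcongr
        linarith [pow_nonneg (sq_nonneg x) 2]
    _ = |y * (5 * x ^ 4 - 10 * x ^ 2 * y ^ 2 + y ^ 4 + 5) + 10 * (x * y) ^ 2 * y| := by
        congr 1
        ring
    _ ≤ |y * (5 * x ^ 4 - 10 * x ^ 2 * y ^ 2 + y ^ 4 + 5)| + |10 * (x * y) ^ 2 * y| :=
        abs_add_le _ _
    _ ≤ R + 10 * R ^ 2 * |y| := by
        have : |10 * (x * y) ^ 2 * y| = 10 * |x * y| ^ 2 * |y| := by
          rw [abs_mul, abs_mul, abs_pow, abs_of_pos (by norm_num : (0:ℝ) < 10)]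
        rw [this]
        gcongr

theorem abs_pow_three_le_of_norm_surface346_le {x y R : ℝ} (h : ‖surface346 (x, y)‖ ≤ R) :
    |x| ^ 3 ≤ R + 3 * R * |y| := by
  simp only [surface346, norm_prod_le_iff, Real.norm_eq_abs] at h
  obtain ⟨h₁, h₂, -⟩ := h
  have hP : 0 ≤ 3 / 2 + x ^ 2 := by positivity
  calc |x| ^ 3 ≤ |x * (3 / 2 + x ^ 2)| := by
        rw [abs_mul, abs_of_nonneg hP, pow_succ', Even.pow_abs (by norm_num : Even 2)]
        gcongr
        linarith
    _ = |x * (3 / 2 + x ^ 2 - 3 * y ^ 2) + 3 * (x * y) * y| := by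
        congr 1
        ring
    _ ≤ |x * (3 / 2 + x ^ 2 - 3 * y ^ 2)| + |3 * (x * y) * y| := abs_add_le _ _
    _ ≤ R + 3 * R * |y| := by
        have : |3 * (x * y) * y| = 3 * |x * y| * |y| := by
          rw [abs_mul, abs_mul, abs_of_pos (by norm_num : (0:ℝ) < 3)]
        rw [this]
        gcongr

theorem isBounded_preimage_surface346 {s : Set (ℝ × ℝ × ℝ)} (hs : Bornology.IsBounded s) :
    Bornology.IsBounded (surface346 ⁻¹' s) := by
  obtain ⟨R, hR⟩ := hs.exists_norm_le
  set Y := max 1 (R + 10 * R ^ 2)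
  refine isBounded_iff_forall_norm_le.mpr ⟨max (max 1 (R + 3 * R * Y)) Y, ?_⟩
  rintro ⟨x, y⟩ hp
  have h := hR _ hp
  have hR₀ : 0 ≤ R := (norm_nonneg _).trans h
  have hy : |y| ≤ Y :=
    le_max_one_of_pow_le_add_mul (by norm_num) hR₀ (abs_pow_five_le_of_norm_surface346_le h)
  have hx : |x| ≤ max 1 (R + 3 * R * Y) := by
    have h₃ : |x| ^ 3 ≤ R + 3 * R * Y + 0 * |x| := by
      nlinarith [abs_pow_three_le_of_norm_surface346_le h]
    simpa using le_max_one_of_pow_le_add_mul (by norm_num) (by positivity) h₃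
  rw [norm_prod_le_iff, Real.norm_eq_abs, Real.norm_eq_abs]
  exact ⟨le_max_of_le_left hx, le_max_of_le_right hy⟩

theorem continuous_surface346 : Continuous surface346 := by
  unfold surface346
  fun_prop

theorem isCompact_preimage_surface346 {K : Set (ℝ × ℝ × ℝ)} (hK : IsCompact K) :
    IsCompact (surface346 ⁻¹' K) :=
  Metric.isCompact_of_isClosed_isBounded (hK.isClosed.preimage continuous_surface346)
    (isBounded_preimage_surface346 hK.isBounded)

/-- The complete properly embedded surface with a single end of type `(3,4,6)`
(parameter `a = 1/2`): `f(x,y) = (xy, x(3/2 + x² - 3y²), y(5x⁴ - 10x²y² + y⁴ + 5))`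
is injective, an immersion, and proper. -/
theorem stmt_9 (f : ℝ × ℝ → ℝ × ℝ × ℝ)
    (hf : ∀ x y : ℝ, f (x, y) =
      (x * y, x * (3 / 2 + x ^ 2 - 3 * y ^ 2),
        y * (5 * x ^ 4 - 10 * x ^ 2 * y ^ 2 + y ^ 4 + 5))) :
    Function.Injective f ∧
    (∀ p : ℝ × ℝ, Function.Injective (fderiv ℝ f p)) ∧
    (∀ K : Set (ℝ × ℝ × ℝ), IsCompact K → IsCompact (f ⁻¹' K)) := by
  obtain rfl : f = surface346 := funext fun ⟨x, y⟩ => hf x y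
  refine ⟨surface346_injective, fun ⟨x, y⟩ => ?_, fun K hK => isCompact_preimage_surface346 hK⟩
  rw [(hasFDerivAt_surface346 x y).fderiv]
  exact surface346Jacobian_injective x y
end

section
/- Let ζ = e^{2πi/3} and let D = ℂ ∖ {1, ζ, ζ̄} (the plane punctured at the three cube roots of unity). Define f : D → ℝ³ by f(z) = (2·log|z−1| − log|z−ζ| − log|z−ζ̄|, √3·(log|z−ζ| − log|z−ζ̄|), log|z³−1|). Then: (1) f is injective; (2) f is an immersion, i.e. its real derivative is injective at every point of D; (3) f is proper, i.e. the preimage of every compact subset of ℝ³ is compact (equivalently ‖f(z)‖ → ∞ as z approaches any of the three punctures and as |z| → ∞). -/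
/-!
On `D` the map factors as `f = A ∘ g` with `g z = (log ‖z - 1‖, log ‖z - ζ‖, log ‖z - ζ̄‖)` and
`A` an invertible linear map (the third coordinate because `z³ - 1 = (z - 1)(z - ζ)(z - ζ̄)`), so
all three properties reduce to `g`. Equal distances from `z` and `w` to the three points put
`z - w` orthogonal to `ζ - 1` and `ζ̄ - 1`, which span `ℂ`; the differential of `log ‖z - p‖` is
`u ↦ ⟪z - p, u⟫ / ‖z - p‖²`, so a kernel vector is orthogonal to the same two differences; and
bounded log-distances confine `z` to a compact set avoiding the punctures.
-/

open Complex Filter Function Real Topology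
open scoped RealInnerProductSpace ComplexConjugate

theorem exp_neg_le_and_le_exp_of_abs_log_le {x R : ℝ} (hx : 0 < x) (h : |Real.log x| ≤ R) :
    Real.exp (-R) ≤ x ∧ x ≤ Real.exp R := by
  rw [abs_le] at h
  exact ⟨(Real.le_log_iff_exp_le hx).mp h.1, (Real.log_le_iff_le_exp hx).mp h.2⟩

section LogDists

variable {E : Type*} [NormedAddCommGroup E]

noncomputable def logDists (p q r z : E) : ℝ × ℝ × ℝ :=
  (Real.log ‖z - p‖, Real.log ‖z - q‖, Real.log ‖z - r‖)

theorem continuousOn_logDists (p q r : E) :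
    ContinuousOn (logDists p q r) {z | z ≠ p ∧ z ≠ q ∧ z ≠ r} := by
  rintro z ⟨hp, hq, hr⟩
  refine ContinuousAt.continuousWithinAt ?_
  unfold logDists
  fun_prop (disch := simp [sub_eq_zero, *])

theorem isCompact_setOf_logDists_mem [ProperSpace E] (p q r : E) {K : Set (ℝ × ℝ × ℝ)}
    (hK : IsCompact K) :
    IsCompact {z ∈ {z : E | z ≠ p ∧ z ≠ q ∧ z ≠ r} | logDists p q r z ∈ K} := by
  obtain ⟨R, hR⟩ := hK.isBounded.subset_closedBall 0
  set T := {z : E | Real.exp (-R) ≤ ‖z - p‖ ∧ Real.exp (-R) ≤ ‖z - q‖ ∧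
    Real.exp (-R) ≤ ‖z - r‖ ∧ ‖z - p‖ ≤ Real.exp R}
  have hT_closed : IsClosed T := by
    simp only [T, Set.ofPred_and]
    refine (isClosed_le ?_ ?_).inter ((isClosed_le ?_ ?_).inter
      ((isClosed_le ?_ ?_).inter (isClosed_le ?_ ?_))) <;> fun_prop
  have hT_compact : IsCompact T :=
    (isCompact_closedBall p (Real.exp R)).of_isClosed_subset hT_closed
      fun z hz => mem_closedBall_iff_norm.mpr hz.2.2.2
  have hT_sub : T ⊆ {z | z ≠ p ∧ z ≠ q ∧ z ≠ r} := by
    rintro z ⟨hp, hq, hr, -⟩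
    have := Real.exp_pos (-R)
    refine ⟨?_, ?_, ?_⟩ <;> rintro rfl <;> simp at * <;> linarith
  have hsub : {z ∈ {z : E | z ≠ p ∧ z ≠ q ∧ z ≠ r} | logDists p q r z ∈ K} =
      T ∩ logDists p q r ⁻¹' K := by
    ext z
    refine ⟨fun ⟨⟨hp, hq, hr⟩, hzK⟩ => ⟨?_, hzK⟩, fun ⟨hzT, hzK⟩ => ⟨hT_sub hzT, hzK⟩⟩
    have hnorm : ‖logDists p q r z‖ ≤ R := mem_closedBall_zero_iff.mp (hR hzK)
    have bound := fun (x : E) (hx : z ≠ x) (hle : |Real.log ‖z - x‖| ≤ R) =>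
      exp_neg_le_and_le_exp_of_abs_log_le (norm_pos_iff.mpr (sub_ne_zero.mpr hx)) hle
    have h₁ := bound p hp ((norm_fst_le _).trans hnorm)
    have h₂ := bound q hq (((norm_fst_le _).trans (norm_snd_le _)).trans hnorm)
    have h₃ := bound r hr (((norm_snd_le _).trans (norm_snd_le _)).trans hnorm)
    exact ⟨h₁.1, h₂.1, h₃.1, h₁.2⟩
  rw [hsub]
  exact hT_compact.of_isClosed_subset
    (((continuousOn_logDists p q r).mono hT_sub).preimage_isClosed_of_isClosed hT_closed
      hK.isClosed) Set.inter_subset_left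

variable [InnerProductSpace ℝ E]

theorem hasFDerivAt_log_norm_sub {p z : E} (h : z ≠ p) :
    HasFDerivAt (fun w => Real.log ‖w - p‖) ((‖z - p‖ ^ 2)⁻¹ • innerSL ℝ (z - p)) z := by
  have hsq := (((hasFDerivAt_id z).sub_const p).norm_sq.log
    (by simpa [sub_eq_zero] using h)).const_mul 2⁻¹
  refine (hsq.congr_fderiv ?_).congr_of_eventuallyEq (.of_eq (funext fun w => ?_))
  · ext u; simp; ring
  · simp [Real.log_pow]

theorem hasFDerivAt_logDists {p q r z : E} (hp : z ≠ p) (hq : z ≠ q) (hr : z ≠ r) :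
    HasFDerivAt (logDists p q r)
      (((‖z - p‖ ^ 2)⁻¹ • innerSL ℝ (z - p)).prod
        (((‖z - q‖ ^ 2)⁻¹ • innerSL ℝ (z - q)).prod ((‖z - r‖ ^ 2)⁻¹ • innerSL ℝ (z - r)))) z :=
  (hasFDerivAt_log_norm_sub hp).prodMk
    ((hasFDerivAt_log_norm_sub hq).prodMk (hasFDerivAt_log_norm_sub hr))

theorem eq_zero_of_inner_eq_zero_of_span_eq_top {a b u : E}
    (hspan : Submodule.span ℝ {a, b} = ⊤) (ha : ⟪u, a⟫ = 0) (hb : ⟪u, b⟫ = 0) : u = 0 := by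
  have : Submodule.span ℝ {a, b} ≤ (ℝ ∙ u)ᗮ := by
    rw [Submodule.span_le, Set.insert_subset_iff, Set.singleton_subset_iff]
    exact ⟨Submodule.mem_orthogonal_singleton_iff_inner_right.mpr ha,
      Submodule.mem_orthogonal_singleton_iff_inner_right.mpr hb⟩
  rw [hspan, top_le_iff, Submodule.orthogonal_eq_top_iff] at this
  simpa using this

theorem injOn_logDists {p q r : E} (hspan : Submodule.span ℝ {q - p, r - p} = ⊤) :
    Set.InjOn (logDists p q r) {z | z ≠ p ∧ z ≠ q ∧ z ≠ r} := by
  rintro z ⟨hzp, hzq, hzr⟩ w ⟨hwp, hwq, hwr⟩ h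
  have dist_eq : ∀ x, z ≠ x → w ≠ x → Real.log ‖z - x‖ = Real.log ‖w - x‖ → dist z x = dist w x :=
    fun x hz hw hlog => by
      simpa [dist_eq_norm] using Real.log_injOn_pos
        (norm_pos_iff.mpr (sub_ne_zero.mpr hz)) (norm_pos_iff.mpr (sub_ne_zero.mpr hw)) hlog
  simp only [logDists, Prod.mk.injEq] at h
  have hp := dist_eq p hzp hwp h.1
  have hq := EuclideanGeometry.inner_vsub_vsub_of_dist_eq_of_dist_eq hp (dist_eq q hzq hwq h.2.1)
  have hr := EuclideanGeometry.inner_vsub_vsub_of_dist_eq_of_dist_eq hp (dist_eq r hzr hwr h.2.2)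
  rw [vsub_eq_sub, vsub_eq_sub, real_inner_comm] at hq hr
  exact (sub_eq_zero.mp (eq_zero_of_inner_eq_zero_of_span_eq_top hspan hq hr)).symm

theorem injective_fderiv_logDists {p q r z : E} (hspan : Submodule.span ℝ {q - p, r - p} = ⊤)
    (hp : z ≠ p) (hq : z ≠ q) (hr : z ≠ r) :
    Injective (((‖z - p‖ ^ 2)⁻¹ • innerSL ℝ (z - p)).prod
      (((‖z - q‖ ^ 2)⁻¹ • innerSL ℝ (z - q)).prod ((‖z - r‖ ^ 2)⁻¹ • innerSL ℝ (z - r)))) := by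
  refine (injective_iff_map_eq_zero _).mpr fun u hu => ?_
  have inner_eq_zero : ∀ x, z ≠ x → (‖z - x‖ ^ 2)⁻¹ * ⟪z - x, u⟫ = 0 → ⟪z - x, u⟫ = 0 :=
    fun x hx h => (mul_eq_zero.mp h).resolve_left (by simpa [sub_eq_zero] using hx)
  simp only [ContinuousLinearMap.prod_apply, smul_apply, innerSL_apply_apply, smul_eq_mul,
    Prod.mk_eq_zero] at hu
  have hup := inner_eq_zero p hp hu.1
  have huq := inner_eq_zero q hq hu.2.1
  have hur := inner_eq_zero r hr hu.2.2
  refine eq_zero_of_inner_eq_zero_of_span_eq_top hspan ?_ ?_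
  · rw [real_inner_comm, ← sub_sub_sub_cancel_left p q z, inner_sub_left, hup, huq, sub_zero]
  · rw [real_inner_comm, ← sub_sub_sub_cancel_left p r z, inner_sub_left, hup, hur, sub_zero]

end LogDists

noncomputable def primitiveCubeRoot : ℂ := ⟨-(1 / 2), √3 / 2⟩

local notation "ζ₃" => primitiveCubeRoot

theorem exp_two_pi_mul_I_div_three : exp (2 * π * I / 3) = ζ₃ := by
  have harg : 2 * (π : ℂ) * I / 3 = ((π - π / 3 : ℝ) : ℂ) * I := by push_cast; ring
  apply Complex.ext
  · rw [harg, exp_ofReal_mul_I_re, Real.cos_pi_sub, Real.cos_pi_div_three]; rfl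
  · rw [harg, exp_ofReal_mul_I_im, Real.sin_pi_sub, Real.sin_pi_div_three]; rfl

theorem pow_three_sub_one_eq_mul (z : ℂ) : z ^ 3 - 1 = (z - 1) * ((z - ζ₃) * (z - conj ζ₃)) := by
  have hsum : ζ₃ + conj ζ₃ = -1 := by apply Complex.ext <;> simp [primitiveCubeRoot]; ring
  have hprod : ζ₃ * conj ζ₃ = 1 := by
    apply Complex.ext <;> simp [primitiveCubeRoot]
    · linear_combination Real.sq_sqrt (show (0 : ℝ) ≤ 3 by norm_num) / 4
    · ring
  linear_combination (z ^ 2 - z) * hsum + (1 - z) * hprod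

theorem span_sub_one_primitiveCubeRoot : Submodule.span ℝ {ζ₃ - 1, conj ζ₃ - 1} = ⊤ := by
  have ha : ζ₃ - 1 ∈ Submodule.span ℝ {ζ₃ - 1, conj ζ₃ - 1} := Submodule.subset_span (by simp)
  have hb : conj ζ₃ - 1 ∈ Submodule.span ℝ {ζ₃ - 1, conj ζ₃ - 1} := Submodule.subset_span (by simp)
  rw [eq_top_iff, ← Complex.basisOneI.span_eq, Submodule.span_le, Complex.coe_basisOneI,
    Matrix.range_cons, Matrix.range_cons, Matrix.range_empty, Set.union_empty,
    Set.union_subset_iff, Set.singleton_subset_iff, Set.singleton_subset_iff, SetLike.mem_coe,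
    SetLike.mem_coe]
  constructor
  · convert add_mem (Submodule.smul_mem _ (-(1 / 3) : ℝ) ha)
      (Submodule.smul_mem _ (-(1 / 3) : ℝ) hb) using 2
    apply Complex.ext <;> simp [primitiveCubeRoot]; ring
  · convert sub_mem (Submodule.smul_mem _ (√3)⁻¹ ha) (Submodule.smul_mem _ (√3)⁻¹ hb) using 2
    apply Complex.ext <;> simp [primitiveCubeRoot]
    field_simp
    norm_num

theorem log_norm_pow_three_sub_one {z : ℂ} (h₁ : z ≠ 1) (h₂ : z ≠ ζ₃) (h₃ : z ≠ conj ζ₃) :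
    Real.log ‖z ^ 3 - 1‖ = Real.log ‖z - 1‖ + Real.log ‖z - ζ₃‖ + Real.log ‖z - conj ζ₃‖ := by
  rw [pow_three_sub_one_eq_mul, norm_mul, norm_mul, Real.log_mul, Real.log_mul, add_assoc] <;>
    simp [sub_eq_zero, *]

/-- Column `k` is the residue of `(ω₁, ω₂, ω₃)` at the `k`-th cube root of unity `1, ζ, ζ̄`. -/
noncomputable def residueMap : (ℝ × ℝ × ℝ) →L[ℝ] ℝ × ℝ × ℝ where
  toFun v := (2 * v.1 - v.2.1 - v.2.2, √3 * (v.2.1 - v.2.2), v.1 + v.2.1 + v.2.2)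
  map_add' v w := by ext <;> simp <;> ring
  map_smul' c v := by ext <;> simp <;> ring
  cont := by fun_prop

theorem residueMap_injective : Injective residueMap := by
  refine (injective_iff_map_eq_zero _).mpr fun ⟨a, b, c⟩ h => ?_
  simp only [residueMap, ContinuousLinearMap.coe_mk', LinearMap.coe_mk, AddHom.coe_mk,
    Prod.mk_eq_zero, mul_eq_zero, Real.sqrt_eq_zero', sub_eq_zero] at h
  obtain ⟨h₁, h₂ | h₂, h₃⟩ := h
  · norm_num at h₂
  · simp only [Prod.mk_eq_zero]
    refine ⟨?_, ?_, ?_⟩ <;> linarith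

theorem isCompact_preimage_residueMap {K : Set (ℝ × ℝ × ℝ)} (hK : IsCompact K) :
    IsCompact (residueMap ⁻¹' K) :=
  (LinearMap.isClosedEmbedding_of_injective (f := residueMap.toLinearMap)
    (LinearMap.ker_eq_bot.mpr residueMap_injective)).isCompact_preimage hK

/-- The properly embedded sphere with four ends of type `(0,0,1)` and total
curvature `-4π`, punctured at the three cube roots of unity. -/
theorem stmt_10 (ζ : ℂ) (hζ : ζ = Complex.exp (2 * Real.pi * I / 3))
    (D : Set ℂ) (hD : D = {z : ℂ | z ≠ 1 ∧ z ≠ ζ ∧ z ≠ (starRingEnd ℂ) ζ})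
    (f : ℂ → ℝ × ℝ × ℝ)
    (hf : ∀ z, f z =
      (2 * Real.log (‖z - 1‖) - Real.log (‖z - ζ‖)
          - Real.log (‖z - (starRingEnd ℂ) ζ‖),
       Real.sqrt 3 * (Real.log (‖z - ζ‖)
          - Real.log (‖z - (starRingEnd ℂ) ζ‖)),
       Real.log (‖z ^ 3 - 1‖))) :
    Set.InjOn f D ∧
    (∀ z ∈ D, Function.Injective (fderiv ℝ f z)) ∧
    (∀ K : Set (ℝ × ℝ × ℝ), IsCompact K →
      IsCompact {z ∈ D | f z ∈ K}) := by
  rw [exp_two_pi_mul_I_div_three] at hζ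
  subst hζ hD
  have hf_eq : ∀ z ∈ {z : ℂ | z ≠ 1 ∧ z ≠ ζ₃ ∧ z ≠ conj ζ₃},
      f z = residueMap (logDists 1 ζ₃ (conj ζ₃) z) := by
    rintro z ⟨h₁, h₂, h₃⟩
    rw [hf, log_norm_pow_three_sub_one h₁ h₂ h₃]
    rfl
  refine ⟨?_, fun z hz => ?_, fun K hK => ?_⟩
  · exact (residueMap_injective.comp_injOn (injOn_logDists span_sub_one_primitiveCubeRoot)).congr
      fun z hz => (hf_eq z hz).symm
  · obtain ⟨h₁, h₂, h₃⟩ := hz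
    have hD_nhds : {z : ℂ | z ≠ 1 ∧ z ≠ ζ₃ ∧ z ≠ conj ζ₃} ∈ 𝓝 z :=
      (isOpen_ne.inter (isOpen_ne.inter isOpen_ne)).mem_nhds ⟨h₁, h₂, h₃⟩
    rw [((residueMap.hasFDerivAt.comp z (hasFDerivAt_logDists h₁ h₂ h₃)).congr_of_eventuallyEq
      (eventually_of_mem hD_nhds hf_eq)).fderiv]
    exact residueMap_injective.comp
      (injective_fderiv_logDists span_sub_one_primitiveCubeRoot h₁ h₂ h₃)
  · convert isCompact_setOf_logDists_mem 1 ζ₃ (conj ζ₃) (isCompact_preimage_residueMap hK) using 1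
    exact Set.ext fun z => and_congr_right fun hz => by rw [hf_eq z hz]; rfl
end

section
/- Let D = ℝ² ∖ {(1,0), (−1,0)} and define f : D → ℝ³ by f(x,y) = (−y, log( ((1−x)²+y²) / ((1+x)²+y²) ), 2·log( 4x²y² + (x²−y²−1)² )). Then: (1) f is injective; (2) f is an immersion, i.e. its (Fréchet) derivative is injective at every point of D; (3) f is proper, i.e. the preimage of every compact subset of ℝ³ is compact (equivalently ‖f‖ → ∞ as (x,y) approaches (±1,0) and as |(x,y)| → ∞). -/
/-!
Write `N_c` for the squared distance to `(c, 0)`. On the twice-punctured plane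
`f = (-y, log N₁ - log N₋₁, 2 (log N₁ + log N₋₁))` (the real parts of `∫ ω`), so up to an invertible
linear map of `ℝ³` it is `φ = (-y, log N₁, log N₋₁)`. The map `φ` is injective because
`N₋₁ - N₁ = 4x`; its differential kills `u` only if `u₂ = 0` and `(x - 1) u₁ = (x + 1) u₁ = 0`;
and a bound on `φ` confines both `N₁` and `N₋₁` to a compact interval of `(0, ∞)`, hence `p` to a
compact subset of the twice-punctured plane.
-/

open Function Real Set

lemma mem_Icc_exp_of_abs_log_le {x R : ℝ} (hx : 0 < x) (h : |log x| ≤ R) :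
    x ∈ Icc (exp (-R)) (exp R) :=
  ⟨(le_log_iff_exp_le hx).mp (neg_le_of_abs_le h), (log_le_iff_le_exp hx).mp (le_of_abs_le h)⟩

namespace TwicePuncturedPlane

-- Not `dist p (c, 0) ^ 2`: the distance on `ℝ × ℝ` is the sup distance.
def sqDist (c : ℝ) (p : ℝ × ℝ) : ℝ := (p.1 - c) ^ 2 + p.2 ^ 2

lemma sqDist_pos_iff {c : ℝ} {p : ℝ × ℝ} : 0 < sqDist c p ↔ p ≠ (c, 0) := by
  obtain ⟨x, y⟩ := p
  refine ⟨fun h hp => ?_, fun hp => ?_⟩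
  · simp_all [sqDist]
  · by_contra! h
    unfold sqDist at h
    have hx : (x - c) ^ 2 = 0 := by nlinarith [sq_nonneg y, sq_nonneg (x - c)]
    have hy : y ^ 2 = 0 := by nlinarith [sq_nonneg y, sq_nonneg (x - c)]
    exact hp (Prod.ext (sub_eq_zero.mp (pow_eq_zero_iff two_ne_zero |>.mp hx))
      (pow_eq_zero_iff two_ne_zero |>.mp hy))

lemma continuous_sqDist (c : ℝ) : Continuous (sqDist c) := by
  unfold sqDist; fun_prop

lemma isCompact_sqDist_le (c r : ℝ) : IsCompact {p | sqDist c p ≤ r} := by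
  refine ((isCompact_Icc (a := c - √r) (b := c + √r)).prod
    (isCompact_Icc (a := -√r) (b := √r))).of_isClosed_subset
    (isClosed_le (continuous_sqDist c) continuous_const) fun p (hp : sqDist c p ≤ r) => ?_
  unfold sqDist at hp
  have hx := abs_le.mp (abs_le_sqrt (x := p.1 - c) (y := r) (by linarith [sq_nonneg p.2]))
  have hy := abs_le.mp (abs_le_sqrt (x := p.2) (y := r) (by linarith [sq_nonneg (p.1 - c)]))
  exact ⟨⟨by linarith [hx.1], by linarith [hx.2]⟩, hy⟩

lemma hasFDerivAt_sqDist (c : ℝ) (p : ℝ × ℝ) :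
    HasFDerivAt (sqDist c)
      ((2 * (p.1 - c)) • ContinuousLinearMap.fst ℝ ℝ ℝ + (2 * p.2) • ContinuousLinearMap.snd ℝ ℝ ℝ)
      p := by
  refine (((hasFDerivAt_fst.sub_const c).pow 2).add
    ((hasFDerivAt_snd (𝕜 := ℝ) (E := ℝ) (F := ℝ) (p := p)).pow 2)).congr_fderiv ?_
  ext <;> simp

def twicePunctured : Set (ℝ × ℝ) := {p | p ≠ (1, 0) ∧ p ≠ (-1, 0)}

lemma isOpen_twicePunctured : IsOpen twicePunctured :=
  (isOpen_ne.preimage continuous_id).inter (isOpen_ne.preimage continuous_id)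

noncomputable def logDistMap (p : ℝ × ℝ) : ℝ × ℝ × ℝ :=
  (-p.2, log (sqDist 1 p), log (sqDist (-1) p))

lemma injOn_logDistMap : InjOn logDistMap twicePunctured := by
  rintro p ⟨hp₁, hp₂⟩ q ⟨hq₁, hq₂⟩ h
  simp only [logDistMap, Prod.mk.injEq, neg_inj] at h
  obtain ⟨hy, h₁, h₂⟩ := h
  replace h₁ := log_injOn_pos (sqDist_pos_iff.mpr hp₁) (sqDist_pos_iff.mpr hq₁) h₁
  replace h₂ := log_injOn_pos (sqDist_pos_iff.mpr hp₂) (sqDist_pos_iff.mpr hq₂) h₂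
  -- `sqDist (-1) p - sqDist 1 p = 4 * p.1`, so equal distances to both punctures determine `p.1`
  refine Prod.ext ?_ hy
  unfold sqDist at h₁ h₂
  linarith

lemma continuousOn_logDistMap : ContinuousOn logDistMap twicePunctured := fun _ ⟨hp₁, hp₂⟩ =>
  (continuous_snd.neg.continuousAt.prodMk
    (((continuous_sqDist 1).continuousAt.log (sqDist_pos_iff.mpr hp₁).ne').prodMk
      ((continuous_sqDist (-1)).continuousAt.log (sqDist_pos_iff.mpr hp₂).ne'))).continuousWithinAt

lemma injective_fderiv_logDistMap {p : ℝ × ℝ} (hp : p ∈ twicePunctured) :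
    Injective (fderiv ℝ logDistMap p) := by
  have hN₁ := (sqDist_pos_iff.mpr hp.1).ne'
  have hN₂ := (sqDist_pos_iff.mpr hp.2).ne'
  have hφ : HasFDerivAt logDistMap _ p := hasFDerivAt_snd.neg.prodMk
    (((hasFDerivAt_sqDist 1 p).log hN₁).prodMk ((hasFDerivAt_sqDist (-1) p).log hN₂))
  rw [hφ.fderiv, injective_iff_map_eq_zero]
  rintro ⟨u₁, u₂⟩ hu
  simp only [ContinuousLinearMap.prod_apply, neg_apply, smul_apply, add_apply,
    ContinuousLinearMap.coe_fst', ContinuousLinearMap.coe_snd', smul_eq_mul, Prod.mk_eq_zero,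
    neg_eq_zero] at hu
  obtain ⟨rfl, h₁, h₂⟩ := hu
  simp only [mul_zero, add_zero] at h₁ h₂
  replace h₁ := (mul_eq_zero.mp h₁).resolve_left (inv_ne_zero hN₁)
  replace h₂ := (mul_eq_zero.mp h₂).resolve_left (inv_ne_zero hN₂)
  exact Prod.mk_eq_zero.mpr ⟨by linear_combination (h₂ - h₁) / 4, rfl⟩

lemma isCompact_sep_logDistMap_mem {K : Set (ℝ × ℝ × ℝ)} (hK : IsCompact K) :
    IsCompact {p ∈ twicePunctured | logDistMap p ∈ K} := by
  obtain ⟨R, hR⟩ := hK.isBounded.subset_closedBall 0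
  set T := {p | sqDist 1 p ≤ exp R} ∩ {p | exp (-R) ≤ sqDist 1 p ∧ exp (-R) ≤ sqDist (-1) p}
  have hT : IsCompact T := (isCompact_sqDist_le 1 _).inter_right <|
    (isClosed_le continuous_const (continuous_sqDist 1)).inter
      (isClosed_le continuous_const (continuous_sqDist (-1)))
  have hTD : T ⊆ twicePunctured := fun p ⟨_, h₁, h₂⟩ =>
    ⟨sqDist_pos_iff.mp ((exp_pos _).trans_le h₁), sqDist_pos_iff.mp ((exp_pos _).trans_le h₂)⟩
  have hsep : {p ∈ twicePunctured | logDistMap p ∈ K} = T ∩ logDistMap ⁻¹' K := by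
    refine Subset.antisymm (fun p ⟨hp, hpK⟩ => ⟨?_, hpK⟩) fun p ⟨hpT, hpK⟩ => ⟨hTD hpT, hpK⟩
    have hnorm : ‖logDistMap p‖ ≤ R := mem_closedBall_zero_iff.mp (hR hpK)
    have h₁ := mem_Icc_exp_of_abs_log_le (sqDist_pos_iff.mpr hp.1)
      (((norm_fst_le _).trans (norm_snd_le _)).trans hnorm)
    have h₂ := mem_Icc_exp_of_abs_log_le (sqDist_pos_iff.mpr hp.2)
      (((norm_snd_le _).trans (norm_snd_le _)).trans hnorm)
    exact ⟨h₁.2, h₁.1, h₂.1⟩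
  rw [hsep]
  exact hT.of_isClosed_subset ((continuousOn_logDistMap.mono hTD).preimage_isClosed_of_isClosed
    hT.isClosed hK.isClosed) inter_subset_left

noncomputable def diffSumEquiv : (ℝ × ℝ × ℝ) ≃L[ℝ] ℝ × ℝ × ℝ :=
  LinearEquiv.toContinuousLinearEquiv
    { toFun := fun v => (v.1, v.2.1 - v.2.2, 2 * (v.2.1 + v.2.2))
      invFun := fun w => (w.1, w.2.1 / 2 + w.2.2 / 4, w.2.2 / 4 - w.2.1 / 2)
      map_add' := fun v w => by ext <;> simp <;> ring
      map_smul' := fun a v => by ext <;> simp <;> ring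
      left_inv := fun v => by ext <;> simp <;> ring
      right_inv := fun w => by ext <;> simp <;> ring }

lemma diffSumEquiv_apply (v : ℝ × ℝ × ℝ) :
    diffSumEquiv v = (v.1, v.2.1 - v.2.2, 2 * (v.2.1 + v.2.2)) := rfl

lemma eqOn_diffSumEquiv_comp_logDistMap :
    EqOn (fun p : ℝ × ℝ => (-p.2,
        log (((1 - p.1) ^ 2 + p.2 ^ 2) / ((1 + p.1) ^ 2 + p.2 ^ 2)),
        2 * log (4 * p.1 ^ 2 * p.2 ^ 2 + (p.1 ^ 2 - p.2 ^ 2 - 1) ^ 2)))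
      (diffSumEquiv ∘ logDistMap) twicePunctured := by
  rintro ⟨x, y⟩ ⟨h₁, h₂⟩
  have hratio : ((1 - x) ^ 2 + y ^ 2) / ((1 + x) ^ 2 + y ^ 2) =
      sqDist 1 (x, y) / sqDist (-1) (x, y) := by
    unfold sqDist; ring
  have hprod : 4 * x ^ 2 * y ^ 2 + (x ^ 2 - y ^ 2 - 1) ^ 2 =
      sqDist 1 (x, y) * sqDist (-1) (x, y) := by
    unfold sqDist; ring
  have hN₁ := (sqDist_pos_iff.mpr h₁).ne'
  have hN₂ := (sqDist_pos_iff.mpr h₂).ne'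
  simp only [comp_apply, diffSumEquiv_apply, logDistMap, hratio, hprod, log_div hN₁ hN₂,
    log_mul hN₁ hN₂]

end TwicePuncturedPlane

open TwicePuncturedPlane in
/-- The properly embedded sphere with two ends of type `(0,0,1)` and one end
of type `(2,0,1)`, defined on `ℝ² ∖ {(±1,0)}`. -/
theorem stmt_11 (D : Set (ℝ × ℝ))
    (hD : D = {p : ℝ × ℝ | p ≠ (1, 0) ∧ p ≠ (-1, 0)})
    (f : ℝ × ℝ → ℝ × ℝ × ℝ)
    (hf : ∀ x y : ℝ, f (x, y) =
      (-y,
       Real.log (((1 - x) ^ 2 + y ^ 2) / ((1 + x) ^ 2 + y ^ 2)),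
       2 * Real.log (4 * x ^ 2 * y ^ 2 + (x ^ 2 - y ^ 2 - 1) ^ 2))) :
    Set.InjOn f D ∧
    (∀ p ∈ D, Function.Injective (fderiv ℝ f p)) ∧
    (∀ K : Set (ℝ × ℝ × ℝ), IsCompact K →
      IsCompact {p ∈ D | f p ∈ K}) := by
  subst hD
  have hfφ : EqOn f (diffSumEquiv ∘ logDistMap) twicePunctured := fun p hp =>
    (hf p.1 p.2).trans (eqOn_diffSumEquiv_comp_logDistMap hp)
  refine ⟨(diffSumEquiv.injective.injOn.comp injOn_logDistMap (mapsTo_univ _ _)).congr hfφ.symm,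
    fun p hp => ?_, fun K hK => ?_⟩
  · rw [(hfφ.eventuallyEq_of_mem (isOpen_twicePunctured.mem_nhds hp)).fderiv_eq,
      diffSumEquiv.comp_fderiv]
    exact diffSumEquiv.injective.comp (injective_fderiv_logDistMap hp)
  · convert isCompact_sep_logDistMap_mem
      (diffSumEquiv.toHomeomorph.isCompact_preimage.mpr hK) using 1
    ext p
    exact and_congr_right fun hp => by rw [hfφ hp]; rfl
end

section
/- Let n ≥ 3 be an integer and let a, b be positive real numbers. Define f : ℂ∖{0} → ℝ³ by f(z) = (Re(z) + Re(1/z), −(Im(z) − Im(1/z)), (a/(n−1))·(Re(z^{n−1}) + Re(z^{1−n})) + b·n·log|z|); in polar coordinates z = r e^{it} this is f(r,t) = ((r + 1/r)cos t, −(r + 1/r)sin t, (a/(n−1))(r^{n−1} + r^{1−n})cos((n−1)t) + b·n·log r). Then f is injective. -/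
/-!
The first two coordinates of `f z` are the real and imaginary parts of `conj z + z⁻¹`. If this
agrees at `z` and `w`, then taking norms forces `‖z‖ = ‖w‖` (and then `w = z`) or
`‖z‖ * ‖w‖ = 1` (and then `w = (conj z)⁻¹`). The reflection `z ↦ (conj z)⁻¹` in the unit circle
preserves `Re (z ^ (n - 1)) + Re (z ^ (1 - n))` but changes the sign of `log ‖z‖`, so the third
coordinate forces `log ‖z‖ = 0`, i.e. `z` lies on the unit circle, where the reflection is the
identity.
-/

open Complex ComplexConjugate

namespace Complex

lemma re_zpow_inv_conj (z : ℂ) (k : ℤ) : ((conj z)⁻¹ ^ k).re = (z ^ (-k)).re := by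
  rw [inv_zpow', ← map_zpow₀, conj_re]

lemma inv_conj_eq_self_of_norm_eq_one {z : ℂ} (hz : ‖z‖ = 1) : (conj z)⁻¹ = z := by
  rw [← map_inv₀, inv_eq_conj hz, conj_conj]

lemma mul_normSq_add_one_eq_of_conj_add_inv_eq {z w : ℂ} (hz : z ≠ 0) (hw : w ≠ 0)
    (h : conj z + z⁻¹ = conj w + w⁻¹) :
    w * (normSq z + 1) = z * (normSq w + 1) := by
  rw [normSq_eq_conj_mul_self, normSq_eq_conj_mul_self]
  field_simp at h
  linear_combination h

lemma eq_or_eq_inv_conj_of_conj_add_inv_eq {z w : ℂ} (hz : z ≠ 0) (hw : w ≠ 0)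
    (h : conj z + z⁻¹ = conj w + w⁻¹) : w = z ∨ w = (conj z)⁻¹ := by
  have key := mul_normSq_add_one_eq_of_conj_add_inv_eq hz hw h
  have hnorm : ‖w‖ * (‖z‖ ^ 2 + 1) = ‖z‖ * (‖w‖ ^ 2 + 1) := by
    simpa [normSq_eq_norm_sq, ← ofReal_pow, ← ofReal_one, ← ofReal_add, norm_real,
      abs_of_pos (by positivity : (0 : ℝ) < ‖z‖ ^ 2 + 1),
      abs_of_pos (by positivity : (0 : ℝ) < ‖w‖ ^ 2 + 1)] using congrArg norm key
  have hpos : (normSq z : ℂ) + 1 ≠ 0 := by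
    exact_mod_cast (by linarith [normSq_nonneg z] : normSq z + 1 ≠ 0)
  rcases mul_eq_zero.1 (by linear_combination hnorm : (‖z‖ - ‖w‖) * (‖z‖ * ‖w‖ - 1) = 0)
    with hzw | hzw
  · left
    rw [normSq_eq_norm_sq w, ← sub_eq_zero.1 hzw, ← normSq_eq_norm_sq] at key
    exact mul_right_cancel₀ hpos key
  · right
    have hsq : (normSq z : ℂ) * normSq w = 1 := by
      rw [normSq_eq_norm_sq, normSq_eq_norm_sq]
      exact_mod_cast (by linear_combination (‖z‖ * ‖w‖ + 1) * hzw : ‖z‖ ^ 2 * ‖w‖ ^ 2 = 1)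
    refine (inv_eq_of_mul_eq_one_right (mul_right_cancel₀ hpos ?_)).symm
    linear_combination conj z * key + hsq - (normSq w + 1) * normSq_eq_conj_mul_self (z := z)

end Complex

lemma re_pow_add_re_zpow_inv_conj {n : ℕ} (hn : 1 ≤ n) (z : ℂ) :
    ((conj z)⁻¹ ^ (n - 1)).re + ((conj z)⁻¹ ^ ((1 : ℤ) - n)).re
      = (z ^ (n - 1)).re + (z ^ ((1 : ℤ) - n)).re := by
  have hm : (1 : ℤ) - n = -((n - 1 : ℕ) : ℤ) := by omega
  simp only [hm, ← zpow_natCast, re_zpow_inv_conj, neg_neg, add_comm]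

theorem stmt_13_general (n : ℕ) (hn : 3 ≤ n) (a b : ℝ) (hb : 0 < b)
    (f : ℂ → ℝ × ℝ × ℝ)
    (hf : ∀ z, f z =
      (z.re + (1 / z).re,
       -(z.im - (1 / z).im),
       (a / ((n : ℝ) - 1)) * ((z ^ (n - 1)).re + (z ^ ((1 : ℤ) - n)).re)
         + b * n * Real.log ‖z‖)) :
    Set.InjOn f {z : ℂ | z ≠ 0} := by
  intro z hz w hw hfzw
  rw [hf, hf, Prod.mk.injEq, Prod.mk.injEq] at hfzw
  obtain ⟨hre, him, hheight⟩ := hfzw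
  have hconj : conj z + z⁻¹ = conj w + w⁻¹ := by
    refine Complex.ext (by simpa using hre) ?_
    simp only [one_div] at him
    simp only [add_im, conj_im]
    linarith
  rcases eq_or_eq_inv_conj_of_conj_add_inv_eq hz hw hconj with rfl | rfl
  · rfl
  rw [re_pow_add_re_zpow_inv_conj (by omega), norm_inv, norm_conj, Real.log_inv] at hheight
  have hlog : Real.log ‖z‖ = 0 := by
    have : 0 < b * n := by positivity
    nlinarith
  have hnorm : ‖z‖ = 1 := Real.eq_one_of_pos_of_log_eq_zero (norm_pos_iff.2 hz) hlog
  exact (inv_conj_eq_self_of_norm_eq_one hnorm).symm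

/-- The embedded sphere with two ends of type `(2,2,n)`, one at `0` and one at
`∞`: the map `f` below is injective on `ℂ ∖ {0}`. -/
theorem stmt_13 (n : ℕ) (hn : 3 ≤ n) (a b : ℝ) (ha : 0 < a) (hb : 0 < b)
    (f : ℂ → ℝ × ℝ × ℝ)
    (hf : ∀ z, f z =
      (z.re + (1 / z).re,
       -(z.im - (1 / z).im),
       (a / ((n : ℝ) - 1)) * ((z ^ (n - 1)).re + (z ^ ((1 : ℤ) - n)).re)
         + b * n * Real.log ‖z‖)) :
    Set.InjOn f {z : ℂ | z ≠ 0} :=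
  stmt_13_general n hn a b hb f hf
end

section
/- Define f : ℝ² ∖ {(0,0)} → ℝ³ by f(x,y) = (−y, −xy − (1/2)·log(x²+y²), (1/3)·x·(x² − 3y² + 1)). Then f is injective, and f is an immersion: its (Fréchet) derivative is injective at every point of ℝ² ∖ {(0,0)}. -/
/-!
Equal first coordinates force `y₁ = y₂ = y`; if `x₁ ≠ x₂`, equal third coordinates put
`(x₁, x₂)` on the ellipse `x₁² + x₁x₂ + x₂² = 3y² - 1`, and equal second coordinates give
`log a - log b = 2y(x₂ - x₁)` for `a = x₁² + y²`, `b = x₂² + y²`. The logarithmic mean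
dominates the geometric one, `|log a - log b| · √(ab) ≤ |a - b|`, so `4y²ab ≤ (x₁ + x₂)²`,
and a polynomial inequality shows the opposite strict inequality on the ellipse. A kernel
vector of the differential leads to the same configuration with `x₁ = x₂`.
-/

open Real

noncomputable def surface (p : ℝ × ℝ) : ℝ × ℝ × ℝ :=
  (-p.2, -(p.1 * p.2) - 1 / 2 * log (p.1 ^ 2 + p.2 ^ 2), 1 / 3 * p.1 * (p.1 ^ 2 - 3 * p.2 ^ 2 + 1))

theorem sq_le_sinh_sq (z : ℝ) : z ^ 2 ≤ sinh z ^ 2 := by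
  rw [sq_le_sq, abs_sinh]
  exact self_le_sinh_iff.mpr (abs_nonneg z)

theorem sub_sq_mul_exp_mul_exp_le (s t : ℝ) :
    (s - t) ^ 2 * (exp s * exp t) ≤ (exp s - exp t) ^ 2 := by
  set m := exp ((s + t) / 2)
  set z := (s - t) / 2
  have hprod : exp s * exp t = m ^ 2 := by rw [← exp_add, ← exp_nat_mul]; ring_nf
  have hdiff : exp s - exp t = 2 * m * sinh z := by
    rw [sinh_eq, mul_comm 2, mul_assoc, mul_div_cancel₀ _ two_ne_zero, mul_sub, ← exp_add,
      ← exp_add]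
    congr 2 <;> ring
  rw [hprod, hdiff, show s - t = 2 * z by ring]
  nlinarith [sq_le_sinh_sq z, sq_nonneg m]

theorem log_sub_log_sq_mul_le {a b : ℝ} (ha : 0 < a) (hb : 0 < b) :
    (log a - log b) ^ 2 * (a * b) ≤ (a - b) ^ 2 := by
  simpa only [exp_log ha, exp_log hb] using sub_sq_mul_exp_mul_exp_le (log a) (log b)

/- With `c = ((x₁ + x₂) / 2) ^ 2` and `d = (x₁ - x₂) ^ 2`, a quarter of the difference of the
two sides is `4c(c - 1/6)² + (2c - 5/36)² + 23/1296` plus `d` times a polynomial in `c, d` with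
nonnegative coefficients. -/
theorem add_sq_lt_of_sq_add_mul_add_sq_eq {x₁ x₂ y : ℝ}
    (h : x₁ ^ 2 + x₁ * x₂ + x₂ ^ 2 = 3 * y ^ 2 - 1) :
    (x₁ + x₂) ^ 2 < 4 * y ^ 2 * ((x₁ ^ 2 + y ^ 2) * (x₂ ^ 2 + y ^ 2)) := by
  rw [show y ^ 2 = ((x₁ + x₂) / 2) ^ 2 + (x₁ - x₂) ^ 2 / 12 + 1 / 3 by linear_combination -h / 3]
  have hs := sq_nonneg (x₁ + x₂)
  have hd := sq_nonneg (x₁ - x₂)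
  nlinarith [mul_nonneg hs (sq_nonneg ((x₁ + x₂) ^ 2 / 4 - 1 / 6)),
    sq_nonneg ((x₁ + x₂) ^ 2 / 2 - 5 / 36), mul_nonneg hd hs, mul_nonneg hd hd,
    mul_nonneg (mul_nonneg hd hd) hd, mul_nonneg (mul_nonneg hd hd) hs,
    mul_nonneg (mul_nonneg hd hs) hs]

theorem sq_add_sq_pos {p : ℝ × ℝ} (hp : p ≠ 0) : 0 < p.1 ^ 2 + p.2 ^ 2 := by
  obtain ⟨x, y⟩ := p
  rcases eq_or_ne x 0 with rfl | hx
  · have hy : y ≠ 0 := by rintro rfl; exact hp rfl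
    positivity
  · positivity

theorem surface_injOn : Set.InjOn surface {p | p ≠ 0} := by
  rintro ⟨x₁, y⟩ hp ⟨x₂, y'⟩ hq h
  simp only [surface, Prod.mk.injEq, neg_inj] at h
  obtain ⟨rfl, hlog, hcubic⟩ := h
  by_contra hne
  have hx : x₁ - x₂ ≠ 0 := sub_ne_zero.mpr fun h ↦ hne (by rw [h])
  have hellipse : x₁ ^ 2 + x₁ * x₂ + x₂ ^ 2 = 3 * y ^ 2 - 1 :=
    mul_left_cancel₀ hx (by linear_combination 3 * hcubic)
  have hmean := log_sub_log_sq_mul_le (sq_add_sq_pos hp) (sq_add_sq_pos hq)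
  rw [show log (x₁ ^ 2 + y ^ 2) - log (x₂ ^ 2 + y ^ 2) = 2 * y * (x₂ - x₁) by
    linear_combination -2 * hlog] at hmean
  have hbound : (x₁ - x₂) ^ 2 * (4 * y ^ 2 * ((x₁ ^ 2 + y ^ 2) * (x₂ ^ 2 + y ^ 2))) ≤
      (x₁ - x₂) ^ 2 * (x₁ + x₂) ^ 2 := by
    linear_combination hmean
  exact (le_of_mul_le_mul_left hbound (pow_two_pos_of_ne_zero hx)).not_gt
    (add_sq_lt_of_sq_add_mul_add_sq_eq hellipse)

theorem fderiv_surface_apply {p : ℝ × ℝ} (hp : p.1 ^ 2 + p.2 ^ 2 ≠ 0) (v : ℝ × ℝ) :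
    fderiv ℝ surface p v =
      (-v.2, -(p.2 * v.1 + p.1 * v.2) - (p.1 * v.1 + p.2 * v.2) / (p.1 ^ 2 + p.2 ^ 2),
        (p.1 ^ 2 - p.2 ^ 2 + 1 / 3) * v.1 - 2 * p.1 * p.2 * v.2) := by
  have hx : HasFDerivAt (fun q : ℝ × ℝ ↦ q.1) (ContinuousLinearMap.fst ℝ ℝ ℝ) p := hasFDerivAt_fst
  have hy : HasFDerivAt (fun q : ℝ × ℝ ↦ q.2) (ContinuousLinearMap.snd ℝ ℝ ℝ) p := hasFDerivAt_snd
  have h₁ : HasFDerivAt (fun q : ℝ × ℝ ↦ -q.2) _ p := hy.neg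
  have h₂ : HasFDerivAt (fun q : ℝ × ℝ ↦ -(q.1 * q.2) - 1 / 2 * log (q.1 ^ 2 + q.2 ^ 2)) _ p :=
    (hx.mul hy).neg.sub ((((hx.pow 2).add (hy.pow 2)).log hp).const_mul (1 / 2))
  have h₃ : HasFDerivAt (fun q : ℝ × ℝ ↦ 1 / 3 * q.1 * (q.1 ^ 2 - 3 * q.2 ^ 2 + 1)) _ p :=
    (hx.const_mul (1 / 3)).mul (((hx.pow 2).sub ((hy.pow 2).const_mul 3)).add_const 1)
  rw [(show HasFDerivAt surface _ p from h₁.prodMk (h₂.prodMk h₃)).fderiv]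
  simp only [neg_add_rev, one_div, Pi.add_apply, Nat.add_one_sub_one, pow_one, nsmul_eq_mul,
    Nat.cast_ofNat, smul_add, ContinuousLinearMap.prod_apply, neg_apply,
    ContinuousLinearMap.coe_snd', sub_apply, add_apply, smul_apply, ContinuousLinearMap.coe_fst',
    smul_eq_mul, Prod.mk.injEq, true_and]
  constructor <;> ring

theorem injective_fderiv_surface {p : ℝ × ℝ} (hp : p ≠ 0) :
    Function.Injective (fderiv ℝ surface p) := by
  obtain ⟨x, y⟩ := p
  have hr := sq_add_sq_pos hp
  rw [injective_iff_map_eq_zero]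
  rintro ⟨u, w⟩ hv
  rw [fderiv_surface_apply hr.ne'] at hv
  simp only [Prod.mk_eq_zero, neg_eq_zero] at hv ⊢
  obtain ⟨rfl, hlog, hcubic⟩ := hv
  refine ⟨?_, rfl⟩
  by_contra hu
  have hcircle : y * (x ^ 2 + y ^ 2) = -x := by
    field_simp at hlog
    exact mul_left_cancel₀ hu (by linear_combination -hlog)
  have hellipse : x ^ 2 + x * x + x ^ 2 = 3 * y ^ 2 - 1 :=
    mul_left_cancel₀ hu (by linear_combination 3 * hcubic)
  refine (add_sq_lt_of_sq_add_mul_add_sq_eq hellipse).ne ?_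
  linear_combination 4 * (x - y * (x ^ 2 + y ^ 2)) * hcircle

/-- The embedded surface with one horn end of type `(0,0,1)` and one end of
type `(2,3,4)`: `f(x,y) = (-y, -xy - log(x²+y²)/2, x(x²-3y²+1)/3)` is
injective and an immersion on `ℝ² ∖ {(0,0)}`. -/
theorem stmt_14 (f : ℝ × ℝ → ℝ × ℝ × ℝ)
    (hf : ∀ x y : ℝ, f (x, y) =
      (-y, -(x * y) - (1 / 2) * Real.log (x ^ 2 + y ^ 2),
        (1 / 3) * x * (x ^ 2 - 3 * y ^ 2 + 1))) :
    Set.InjOn f {p : ℝ × ℝ | p ≠ (0, 0)} ∧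
    (∀ p : ℝ × ℝ, p ≠ (0, 0) → Function.Injective (fderiv ℝ f p)) := by
  obtain rfl : f = surface := funext fun ⟨x, y⟩ ↦ hf x y
  exact ⟨surface_injOn, fun _ ↦ injective_fderiv_surface⟩
end

section
/- There exist real numbers λ₁ ∈ (−1/2, 0) and λ₂ ∈ (−5/4, −1) such that ∫₀^{1/2} (x + λ₁) / ( √x · √(2−x) · √(1/2 − x) ) dx = 0 and ∫_{1/2}^{2} (x + λ₂) / ( √x · √(2−x) · √(x − 1/2) ) dx = 0 (both integrals being convergent improper Riemann/Lebesgue integrals). -/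
/-! The period `P(λ) = ∫ (x + λ) / |w|` is affine in `λ`, so by the intermediate value theorem
it suffices to find its sign at the ends of each interval for `λ`. On `(0, 1/2)` the signs of
`x` and `x - 1/2` settle this. On `(1/2, 2)` pair `x` with `5/2 - x`, which swaps the branch
points `1/2` and `2`: with `r = √(x (5/2 - x))` the integrand plus its reflection is
`(√x + √(5/2 - x)) (r + λ) / (r √(2 - x) √(x - 1/2))`, and `1 < r < 5/4` on `(1/2, 5/4)` because
`x (5/2 - x) - 1 = (2 - x)(x - 1/2)` and `25/16 - x (5/2 - x) = (x - 5/4)²`.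
Integrability holds because `|w|` vanishes like a square root at each end. -/

open MeasureTheory intervalIntegral Set

lemma intervalIntegrable_inv_sqrt_sub_left {a b : ℝ} (hab : a ≤ b) :
    IntervalIntegrable (fun x => (√(x - a))⁻¹) volume a b := by
  have h := (intervalIntegrable_rpow' (a := 0) (b := b - a) (r := -(1 / 2))
    (by norm_num)).comp_sub_right a
  rw [zero_add, sub_add_cancel] at h
  refine h.congr fun x hx => ?_
  rw [uIoc_of_le hab] at hx
  rw [Real.sqrt_eq_rpow, Real.rpow_neg (by linarith [hx.1])]

lemma intervalIntegrable_inv_sqrt_sub_right {a b : ℝ} (hab : a ≤ b) :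
    IntervalIntegrable (fun x => (√(b - x))⁻¹) volume a b := by
  have h := (intervalIntegrable_inv_sqrt_sub_left hab).comp_sub_left (a + b)
  simp only [add_sub_cancel_left, add_sub_cancel_right] at h
  simpa [sub_sub, add_comm] using h.symm

lemma intervalIntegrable_div_sqrt_sub_mul_sqrt_sub {g : ℝ → ℝ} {a b : ℝ} (hab : a < b)
    (hg : ContinuousOn g (Icc a b)) :
    IntervalIntegrable (fun x => g x / (√(x - a) * √(b - x))) volume a b := by
  set m := (a + b) / 2 with hm
  have ham : a ≤ m := by linarith
  have hmb : m ≤ b := by linarith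
  have hleft : IntervalIntegrable (fun x => g x / (√(x - a) * √(b - x))) volume a m := by
    have hcont : ContinuousOn (fun x => g x / √(b - x)) (uIcc a m) := by
      rw [uIcc_of_le ham]
      refine (hg.mono (Icc_subset_Icc_right hmb)).div (by fun_prop) fun x hx => ?_
      exact (Real.sqrt_pos.mpr (by linarith [hx.2])).ne'
    convert (intervalIntegrable_inv_sqrt_sub_left ham).continuousOn_mul hcont using 2
    ring
  have hright : IntervalIntegrable (fun x => g x / (√(x - a) * √(b - x))) volume m b := by
    have hcont : ContinuousOn (fun x => g x / √(x - a)) (uIcc m b) := by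
      rw [uIcc_of_le hmb]
      refine (hg.mono (Icc_subset_Icc_left ham)).div (by fun_prop) fun x hx => ?_
      exact (Real.sqrt_pos.mpr (by linarith [hx.1])).ne'
    convert (intervalIntegrable_inv_sqrt_sub_right hmb).continuousOn_mul hcont using 2
    ring
  exact hleft.trans hright

lemma intervalIntegral_neg_of_neg_on {f : ℝ → ℝ} {a b : ℝ}
    (hf : IntervalIntegrable f volume a b) (hneg : ∀ x ∈ Ioo a b, f x < 0) (hab : a < b) :
    ∫ x in a..b, f x < 0 := by
  have := intervalIntegral_pos_of_pos_on hf.neg (fun x hx => neg_pos.mpr (hneg x hx)) hab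
  rwa [Pi.neg_def, intervalIntegral.integral_neg, neg_pos] at this

lemma intervalIntegral_pos_of_pos_add_reflect {f : ℝ → ℝ} {a b : ℝ} (hab : a < b)
    (hf : IntervalIntegrable f volume a b)
    (hpos : ∀ x ∈ Ioo a ((a + b) / 2), 0 < f x + f (a + b - x)) :
    0 < ∫ x in a..b, f x := by
  set m := (a + b) / 2 with hm
  have hm_reflect : a + b - m = m := by linarith
  have h₁ : IntervalIntegrable f volume a m :=
    hf.mono_set (uIcc_subset_uIcc_left (by rw [uIcc_of_le hab.le]; constructor <;> linarith))
  have h₂ : IntervalIntegrable f volume m b :=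
    hf.mono_set (uIcc_subset_uIcc_right (by rw [uIcc_of_le hab.le]; constructor <;> linarith))
  have h₂' : IntervalIntegrable (fun x => f (a + b - x)) volume a m := by
    simpa [hm_reflect] using (h₂.comp_sub_left (a + b)).symm
  have hsplit : ∫ x in a..b, f x = ∫ x in a..m, (f x + f (a + b - x)) := by
    rw [integral_add h₁ h₂', integral_comp_sub_left, hm_reflect, add_sub_cancel_left,
      integral_add_adjacent_intervals h₁ h₂]
  rw [hsplit]
  exact intervalIntegral_pos_of_pos_on (h₁.add h₂') hpos (by linarith)

lemma intervalIntegral_neg_of_neg_add_reflect {f : ℝ → ℝ} {a b : ℝ} (hab : a < b)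
    (hf : IntervalIntegrable f volume a b)
    (hneg : ∀ x ∈ Ioo a ((a + b) / 2), f x + f (a + b - x) < 0) :
    ∫ x in a..b, f x < 0 := by
  have := intervalIntegral_pos_of_pos_add_reflect hab hf.neg fun x hx => by
    simp only [Pi.neg_apply]
    linarith [hneg x hx]
  rwa [Pi.neg_def, intervalIntegral.integral_neg, neg_pos] at this

lemma integral_add_const_div {D : ℝ → ℝ} {a b : ℝ}
    (h₁ : IntervalIntegrable (fun x => 1 / D x) volume a b)
    (hx : IntervalIntegrable (fun x => x / D x) volume a b) (l : ℝ) :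
    ∫ x in a..b, (x + l) / D x = (∫ x in a..b, x / D x) + l * ∫ x in a..b, 1 / D x := by
  simp_rw [add_div, ← mul_one_div l]
  rw [integral_add hx (h₁.const_mul l), intervalIntegral.integral_const_mul]

lemma exists_mem_Ioo_integral_add_div_eq_zero {D : ℝ → ℝ} {a b l₁ l₂ : ℝ} (hl : l₁ ≤ l₂)
    (h₁ : IntervalIntegrable (fun x => 1 / D x) volume a b)
    (hx : IntervalIntegrable (fun x => x / D x) volume a b)
    (hneg : ∫ x in a..b, (x + l₁) / D x < 0) (hpos : 0 < ∫ x in a..b, (x + l₂) / D x) :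
    ∃ l ∈ Ioo l₁ l₂, IntervalIntegrable (fun x => (x + l) / D x) volume a b ∧
      ∫ x in a..b, (x + l) / D x = 0 := by
  have hP : ContinuousOn (fun l => ∫ x in a..b, (x + l) / D x) (Icc l₁ l₂) := by
    simp_rw [integral_add_const_div h₁ hx]
    fun_prop
  obtain ⟨l, hl, hzero⟩ := intermediate_value_Ioo hl hP ⟨hneg, hpos⟩
  refine ⟨l, hl, ?_, hzero⟩
  simp_rw [add_div, ← mul_one_div l]
  exact hx.add (h₁.const_mul l)

-- `|w|` on the two real cycles of `w² = z (z - 2) (z - 1/2)`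
noncomputable def w₁ (x : ℝ) : ℝ := √x * √(2 - x) * √(1 / 2 - x)

noncomputable def w₂ (x : ℝ) : ℝ := √x * √(2 - x) * √(x - 1 / 2)

lemma w₁_pos {x : ℝ} (h₀ : 0 < x) (h₁ : x < 1 / 2) : 0 < w₁ x := by
  unfold w₁
  have := Real.sqrt_pos.mpr h₀
  have := Real.sqrt_pos.mpr (show 0 < 2 - x by linarith)
  have := Real.sqrt_pos.mpr (show 0 < 1 / 2 - x by linarith)
  positivity

lemma intervalIntegrable_div_w₁ {ν : ℝ → ℝ} (hν : Continuous ν) :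
    IntervalIntegrable (fun x => ν x / w₁ x) volume 0 (1 / 2) := by
  have hg : ContinuousOn (fun x => ν x / √(2 - x)) (Icc 0 (1 / 2)) :=
    hν.continuousOn.div (by fun_prop) fun x hx =>
      (Real.sqrt_pos.mpr (by linarith [hx.2])).ne'
  convert intervalIntegrable_div_sqrt_sub_mul_sqrt_sub (by norm_num) hg using 2 with x
  rw [w₁, sub_zero]
  ring

lemma intervalIntegrable_div_w₂ {ν : ℝ → ℝ} (hν : Continuous ν) :
    IntervalIntegrable (fun x => ν x / w₂ x) volume (1 / 2) 2 := by
  have hg : ContinuousOn (fun x => ν x / √x) (Icc (1 / 2) 2) :=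
    hν.continuousOn.div (by fun_prop) fun x hx =>
      (Real.sqrt_pos.mpr (by linarith [hx.1])).ne'
  convert intervalIntegrable_div_sqrt_sub_mul_sqrt_sub (by norm_num) hg using 2 with x
  rw [w₂]
  ring

lemma integral_add_zero_div_w₁_pos : 0 < ∫ x in (0 : ℝ)..(1 / 2), (x + 0) / w₁ x :=
  intervalIntegral_pos_of_pos_on (intervalIntegrable_div_w₁ (by fun_prop))
    (fun x hx => div_pos (by linarith [hx.1]) (w₁_pos hx.1 hx.2)) (by norm_num)

lemma integral_add_neg_half_div_w₁_neg : ∫ x in (0 : ℝ)..(1 / 2), (x + -(1 / 2)) / w₁ x < 0 :=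
  intervalIntegral_neg_of_neg_on (intervalIntegrable_div_w₁ (by fun_prop))
    (fun x hx => div_neg_of_neg_of_pos (by linarith [hx.2]) (w₁_pos hx.1 hx.2)) (by norm_num)

lemma reflect_factor_pos {x : ℝ} (h₁ : 1 / 2 < x) (h₂ : x < 2) :
    0 < (√x + √(5 / 2 - x)) / (√(x * (5 / 2 - x)) * √(2 - x) * √(x - 1 / 2)) := by
  have := Real.sqrt_pos.mpr (show 0 < x by linarith)
  have := Real.sqrt_pos.mpr (show 0 < x * (5 / 2 - x) by nlinarith)
  have := Real.sqrt_pos.mpr (show 0 < 2 - x by linarith)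
  have := Real.sqrt_pos.mpr (show 0 < x - 1 / 2 by linarith)
  positivity

lemma div_w₂_add_div_w₂_reflect (l : ℝ) {x : ℝ} (h₁ : 1 / 2 < x) (h₂ : x < 2) :
    (x + l) / w₂ x + (5 / 2 - x + l) / w₂ (5 / 2 - x) =
      (√x + √(5 / 2 - x)) / (√(x * (5 / 2 - x)) * √(2 - x) * √(x - 1 / 2)) *
        (√(x * (5 / 2 - x)) + l) := by
  have hs := Real.sqrt_pos.mpr (show 0 < x by linarith)
  have ht := Real.sqrt_pos.mpr (show 0 < 5 / 2 - x by linarith)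
  have hu := Real.sqrt_pos.mpr (show 0 < 2 - x by linarith)
  have hv := Real.sqrt_pos.mpr (show 0 < x - 1 / 2 by linarith)
  have hs2 := Real.sq_sqrt (show 0 ≤ x by linarith)
  have ht2 := Real.sq_sqrt (show 0 ≤ 5 / 2 - x by linarith)
  rw [w₂, w₂, show 2 - (5 / 2 - x) = x - 1 / 2 by ring, show 5 / 2 - x - 1 / 2 = 2 - x by ring,
    Real.sqrt_mul (show 0 ≤ x by linarith)]
  -- `field_simp` would otherwise normalise the radicands
  generalize √x = s at *
  generalize √(5 / 2 - x) = t at *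
  generalize √(2 - x) = u at *
  generalize √(x - 1 / 2) = v at *
  subst hs2
  field_simp
  linear_combination (-2 * s) * ht2

lemma one_lt_sqrt_mul_reflect {x : ℝ} (h₁ : 1 / 2 < x) (h₂ : x < 2) : 1 < √(x * (5 / 2 - x)) :=
  (Real.lt_sqrt zero_le_one).mpr (by nlinarith)

lemma sqrt_mul_reflect_lt {x : ℝ} (h : x ≠ 5 / 4) : √(x * (5 / 2 - x)) < 5 / 4 :=
  (Real.sqrt_lt' (by norm_num)).mpr (by nlinarith [sq_pos_of_ne_zero (sub_ne_zero.mpr h)])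

lemma integral_add_neg_one_div_w₂_pos : 0 < ∫ x in (1 / 2 : ℝ)..2, (x + -1) / w₂ x := by
  refine intervalIntegral_pos_of_pos_add_reflect (by norm_num)
    (intervalIntegrable_div_w₂ (by fun_prop)) fun x hx => ?_
  have h₁ : 1 / 2 < x := hx.1
  have h₂ : x < 5 / 4 := by linarith [hx.2]
  rw [show (1 / 2 + 2 : ℝ) = 5 / 2 by norm_num, div_w₂_add_div_w₂_reflect _ h₁ (by linarith)]
  exact mul_pos (reflect_factor_pos h₁ (by linarith))
    (by linarith [one_lt_sqrt_mul_reflect h₁ (by linarith)])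

lemma integral_add_neg_five_quarters_div_w₂_neg :
    ∫ x in (1 / 2 : ℝ)..2, (x + -(5 / 4)) / w₂ x < 0 := by
  refine intervalIntegral_neg_of_neg_add_reflect (by norm_num)
    (intervalIntegrable_div_w₂ (by fun_prop)) fun x hx => ?_
  have h₁ : 1 / 2 < x := hx.1
  have h₂ : x < 5 / 4 := by linarith [hx.2]
  rw [show (1 / 2 + 2 : ℝ) = 5 / 2 by norm_num, div_w₂_add_div_w₂_reflect _ h₁ (by linarith)]
  exact mul_neg_of_pos_of_neg (reflect_factor_pos h₁ (by linarith))
    (by linarith [sqrt_mul_reflect_lt h₂.ne])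

/-- Period-closing conditions for the harmonic torus with one end of type
`(0,0,1)` and one end of type `(2,2,1)`: there exist `λ₁ ∈ (-1/2, 0)` and
`λ₂ ∈ (-5/4, -1)` making the two period integrals vanish. -/
theorem stmt_16 :
    ∃ l₁ ∈ Set.Ioo (-(1 / 2) : ℝ) 0, ∃ l₂ ∈ Set.Ioo (-(5 / 4) : ℝ) (-1),
      IntervalIntegrable
        (fun x : ℝ => (x + l₁) /
          (Real.sqrt x * Real.sqrt (2 - x) * Real.sqrt (1 / 2 - x)))
        volume 0 (1 / 2) ∧
      IntervalIntegrable
        (fun x : ℝ => (x + l₂) /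
          (Real.sqrt x * Real.sqrt (2 - x) * Real.sqrt (x - 1 / 2)))
        volume (1 / 2) 2 ∧
      (∫ x in (0 : ℝ)..(1 / 2), (x + l₁) /
          (Real.sqrt x * Real.sqrt (2 - x) * Real.sqrt (1 / 2 - x))) = 0 ∧
      (∫ x in (1 / 2 : ℝ)..2, (x + l₂) /
          (Real.sqrt x * Real.sqrt (2 - x) * Real.sqrt (x - 1 / 2))) = 0 := by
  obtain ⟨l₁, hl₁, hint₁, hzero₁⟩ := exists_mem_Ioo_integral_add_div_eq_zero (by norm_num)
    (intervalIntegrable_div_w₁ continuous_const) (intervalIntegrable_div_w₁ continuous_id)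
    integral_add_neg_half_div_w₁_neg integral_add_zero_div_w₁_pos
  obtain ⟨l₂, hl₂, hint₂, hzero₂⟩ := exists_mem_Ioo_integral_add_div_eq_zero (by norm_num)
    (intervalIntegrable_div_w₂ continuous_const) (intervalIntegrable_div_w₂ continuous_id)
    integral_add_neg_five_quarters_div_w₂_neg integral_add_neg_one_div_w₂_pos
  exact ⟨l₁, hl₁, l₂, hl₂, hint₁, hint₂, hzero₁, hzero₂⟩
end

section
/- There exists a real number λ ∈ (0, 1) such that ∫_{−1}^{0} (x + λ) / ( √(−x) · √(1−x) · √(1+x) ) dx = 0 (the integral being a convergent improper Riemann/Lebesgue integral). -/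
/-!
Writing `w` for the weight `1 / √(x³ - x)` on `(-1, 0)`, the condition reads
`∫ (x + λ) w = 0`, i.e. `-λ` is the barycenter of the positive measure `w dx` on `(-1, 0)`,
which lies strictly inside the interval. The weight is integrable because its only
singularities are of type `|x - x₀|^(-1/2)`, at the endpoints.
-/

open MeasureTheory intervalIntegral

lemma inv_sqrt_eq_rpow (y : ℝ) : (√y)⁻¹ = y ^ (-(1 / 2) : ℝ) := by
  rcases lt_or_ge y 0 with hy | hy
  · rw [Real.sqrt_eq_zero'.mpr hy.le, Real.rpow_def_of_neg hy, neg_mul,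
      Real.cos_neg, div_mul_eq_mul_div, one_mul, Real.cos_pi_div_two, mul_zero, inv_zero]
  · rw [Real.rpow_neg hy, ← Real.sqrt_eq_rpow]

lemma intervalIntegrable_inv_sqrt (a b : ℝ) :
    IntervalIntegrable (fun x => (√x)⁻¹) volume a b := by
  simpa only [inv_sqrt_eq_rpow] using intervalIntegrable_rpow' (a := a) (b := b) (by norm_num)

lemma inv_sqrt_mul_sqrt_le {a b : ℝ} (hab : 1 ≤ a + b) :
    (√a * √b)⁻¹ ≤ (√a)⁻¹ + (√b)⁻¹ := by
  rcases (Real.sqrt_nonneg a).eq_or_lt with ha | ha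
  · rw [← ha]; simp
  rcases (Real.sqrt_nonneg b).eq_or_lt with hb | hb
  · rw [← hb]; simp
  have hsum : 1 ≤ √a + √b := by
    nlinarith [Real.sq_sqrt (Real.sqrt_pos.mp ha).le, Real.sq_sqrt (Real.sqrt_pos.mp hb).le]
  rw [inv_add_inv ha.ne' hb.ne', inv_eq_one_div]
  gcongr

/-- `1 / |w|` along the real oval of the curve `w² = z (z - 1) (z + 1)` over `[-1, 0]`. -/
noncomputable def periodWeight (x : ℝ) : ℝ := (√(-x) * √(1 - x) * √(1 + x))⁻¹

lemma periodWeight_pos {x : ℝ} (hx : x ∈ Set.Ioo (-1 : ℝ) 0) : 0 < periodWeight x := by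
  have := Real.sqrt_pos.mpr (neg_pos.mpr hx.2)
  have := Real.sqrt_pos.mpr (show 0 < 1 - x by linarith [hx.2])
  have := Real.sqrt_pos.mpr (show 0 < 1 + x by linarith [hx.1])
  unfold periodWeight
  positivity

lemma periodWeight_le {x : ℝ} (hx : x ≤ 0) :
    periodWeight x ≤ (√(-x))⁻¹ + (√(1 + x))⁻¹ := by
  have hmid : (√(1 - x))⁻¹ ≤ 1 := inv_le_one_of_one_le₀ (Real.one_le_sqrt.mpr (by linarith))
  calc periodWeight x = (√(-x) * √(1 + x))⁻¹ * (√(1 - x))⁻¹ := by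
        rw [periodWeight, mul_right_comm, mul_inv]
    _ ≤ (√(-x) * √(1 + x))⁻¹ := mul_le_of_le_one_right (by positivity) hmid
    _ ≤ (√(-x))⁻¹ + (√(1 + x))⁻¹ := inv_sqrt_mul_sqrt_le (by linarith)

lemma intervalIntegrable_periodWeight : IntervalIntegrable periodWeight volume (-1) 0 := by
  have hbound : IntervalIntegrable (fun x => (√(-x))⁻¹ + (√(1 + x))⁻¹) volume (-1) 0 := by
    refine IntervalIntegrable.add ?_ ?_
    · simpa using (IntervalIntegrable.iff_comp_neg).mp (intervalIntegrable_inv_sqrt 1 0)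
    · simpa using (intervalIntegrable_inv_sqrt 0 1).comp_add_left 1
  refine hbound.mono_fun' (by unfold periodWeight; fun_prop) ?_
  rw [Set.uIoc_of_le (by norm_num)]
  filter_upwards [ae_restrict_mem measurableSet_Ioc] with x hx
  rw [Real.norm_of_nonneg (by unfold periodWeight; positivity)]
  exact periodWeight_le hx.2

lemma exists_mem_Ioo_integral_sub_mul_eq_zero {w : ℝ → ℝ} {a b : ℝ} (hab : a < b)
    (hw : IntervalIntegrable w volume a b) (hpos : ∀ x ∈ Set.Ioo a b, 0 < w x) :
    ∃ m ∈ Set.Ioo a b, ∫ x in a..b, (x - m) * w x = 0 := by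
  have hmoment (c : ℝ) : IntervalIntegrable (fun x => (x - c) * w x) volume a b :=
    hw.continuousOn_mul (by fun_prop)
  have hintegral (c : ℝ) :
      ∫ x in a..b, (x - c) * w x = (∫ x in a..b, x * w x) - c * ∫ x in a..b, w x := by
    simp only [sub_mul]
    rw [integral_sub (by simpa using hmoment 0) (hw.const_mul c),
      intervalIntegral.integral_const_mul]
  have hmass : 0 < ∫ x in a..b, w x := intervalIntegral_pos_of_pos_on hw hpos hab
  have hleft : 0 < ∫ x in a..b, (x - a) * w x :=
    intervalIntegral_pos_of_pos_on (hmoment a)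
      (fun x hx => mul_pos (sub_pos.mpr hx.1) (hpos x hx)) hab
  have hright : 0 < ∫ x in a..b, -((x - b) * w x) :=
    intervalIntegral_pos_of_pos_on (hmoment b).neg
      (fun x hx => by nlinarith [hpos x hx, hx.2]) hab
  rw [hintegral] at hleft
  rw [intervalIntegral.integral_neg, hintegral] at hright
  refine ⟨(∫ x in a..b, x * w x) / ∫ x in a..b, w x,
    ⟨(lt_div_iff₀ hmass).mpr (by linarith), (div_lt_iff₀ hmass).mpr (by linarith)⟩, ?_⟩
  rw [hintegral, div_mul_cancel₀ _ hmass.ne', sub_self]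

/-- Period-closing condition for the harmonic torus with a single end of type
`(2,2,3)`: there exists `λ ∈ (0,1)` making the period integral vanish. -/
theorem stmt_17 :
    ∃ l ∈ Set.Ioo (0 : ℝ) 1,
      IntervalIntegrable
        (fun x : ℝ => (x + l) /
          (Real.sqrt (-x) * Real.sqrt (1 - x) * Real.sqrt (1 + x)))
        volume (-1) 0 ∧
      (∫ x in (-1 : ℝ)..0, (x + l) /
          (Real.sqrt (-x) * Real.sqrt (1 - x) * Real.sqrt (1 + x))) = 0 := by
  obtain ⟨m, hm, hzero⟩ := exists_mem_Ioo_integral_sub_mul_eq_zero (by norm_num)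
    intervalIntegrable_periodWeight fun _ => periodWeight_pos
  refine ⟨-m, ⟨by linarith [hm.2], by linarith [hm.1]⟩, ?_, ?_⟩
  · simpa only [periodWeight, div_eq_mul_inv] using
      intervalIntegrable_periodWeight.continuousOn_mul (g := fun x => x + -m) (by fun_prop)
  · simpa only [periodWeight, div_eq_mul_inv, sub_eq_add_neg] using hzero
end

section
/- Let n ≥ 2 be an integer and c ∈ ℝ, and define f : ℂ∖{0} → ℝ³ by f(z) = (Re z, Re(z²)/2 − c·Im(z^{n+1})/(n+1), log|z|). Then the following are equivalent: (i) c ≠ 0; (ii) there exists ε > 0 such that f is an immersion on the punctured disk {z : 0 < |z| < ε}, i.e. its real derivative is injective at every such point. Indeed, the second coordinate of f_x × f_y equals −y/(x²+y²), so f can only be singular on the real axis y = 0, where f_x × f_y = c·(x^{n−1}, 0, xⁿ) up to sign. -/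
open Complex Filter Function

/-!
Each coordinate of `f` is the real part of a local primitive of `ω = (1, z + c·i·zⁿ, 1/z)`
(for `log |z|` this is `log (w / z) + log |z|` near `z`), so `df_z(w) = Re (ω(z) · w)`.
Such a map kills `w` iff `Re w = 0` and `Im (ωₖ(z)) · Im w = 0` for each `k`; hence it is
injective iff `Im (z + c·i·zⁿ) ≠ 0` or `Im (1/z) ≠ 0`. Off the real axis the second condition
holds, and on it `Im (z + c·i·zⁿ) = c·xⁿ`.
-/

noncomputable def reMulCLM (a : ℂ) : ℂ →L[ℝ] ℝ :=
  reCLM.comp ((ContinuousLinearMap.mul ℂ ℂ a).restrictScalars ℝ)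

@[simp]
lemma reMulCLM_apply (a w : ℂ) : reMulCLM a w = (a * w).re := rfl

lemma HasDerivAt.hasFDerivAt_re {g : ℂ → ℂ} {g' z : ℂ} (h : HasDerivAt g g' z) :
    HasFDerivAt (fun w => (g w).re) (reMulCLM g') z :=
  (reCLM.hasFDerivAt.comp z (h.hasFDerivAt.restrictScalars ℝ)).congr_fderiv <| by
    ext w
    simp [mul_comm]

lemma hasFDerivAt_log_norm_s18 {z : ℂ} (hz : z ≠ 0) :
    HasFDerivAt (fun w : ℂ => Real.log ‖w‖) (reMulCLM z⁻¹) z := by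
  have hlog : HasDerivAt (fun w => log (w / z)) z⁻¹ z := by
    simpa [hz] using ((hasDerivAt_id z).div_const z).clog (by simp [hz])
  refine (hlog.hasFDerivAt_re.add_const (Real.log ‖z‖)).congr_of_eventuallyEq ?_
  filter_upwards [eventually_ne_nhds hz] with w hw
  rw [log_re, norm_div, Real.log_div (by simpa using hw) (by simpa using hz), sub_add_cancel]

noncomputable def harmonicEnd (n : ℕ) (c : ℝ) (z : ℂ) : ℝ × ℝ × ℝ :=
  (z.re, (z ^ 2).re / 2 - c * (z ^ (n + 1)).im / ((n : ℝ) + 1), Real.log ‖z‖)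

lemma hasFDerivAt_harmonicEnd (n : ℕ) (c : ℝ) {z : ℂ} (hz : z ≠ 0) :
    HasFDerivAt (harmonicEnd n c)
      ((reMulCLM 1).prod ((reMulCLM (z + c * I * z ^ n)).prod (reMulCLM z⁻¹))) z := by
  have hG : HasDerivAt (fun w => w ^ 2 / 2 + (c / (n + 1) : ℝ) * (I * w ^ (n + 1)))
      (z + c * I * z ^ n) z := by
    refine (((hasDerivAt_pow 2 z).div_const 2).add
      (((hasDerivAt_pow (n + 1) z).const_mul I).const_mul _)).congr_deriv ?_
    simp
    field_simp
  have hre : ∀ w : ℂ, (w ^ 2 / 2 + (c / (n + 1) : ℝ) * (I * w ^ (n + 1))).re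
      = (w ^ 2).re / 2 - c * (w ^ (n + 1)).im / ((n : ℝ) + 1) := by
    intro w
    rw [add_re, div_ofNat_re, re_ofReal_mul, I_mul_re]
    ring
  refine (hasDerivAt_id z).hasFDerivAt_re.prodMk
    ((hG.hasFDerivAt_re.congr_of_eventuallyEq ?_).prodMk (hasFDerivAt_log_norm_s18 hz))
  exact Eventually.of_forall fun w => (hre w).symm

lemma injective_reMulCLM_prod_iff (a b : ℂ) :
    Injective ((reMulCLM 1).prod ((reMulCLM a).prod (reMulCLM b))) ↔ a.im ≠ 0 ∨ b.im ≠ 0 := by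
  rw [injective_iff_map_eq_zero]
  constructor
  · intro h
    by_contra! hab
    exact I_ne_zero (h I (by simp [hab]))
  · intro hab w hw
    simp only [ContinuousLinearMap.prod_apply, reMulCLM_apply, one_mul, Prod.mk_eq_zero,
      mul_re] at hw
    obtain ⟨hre, ha, hb⟩ := hw
    rw [hre] at ha hb
    have him : w.im = 0 := by
      rcases hab with hab | hab
      · simpa [hab] using ha
      · simpa [hab] using hb
    exact Complex.ext hre him

lemma injective_fderiv_harmonicEnd_iff (n : ℕ) (c : ℝ) {z : ℂ} (hz : z ≠ 0) :
    Injective (fderiv ℝ (harmonicEnd n c) z) ↔ z.im ≠ 0 ∨ c ≠ 0 := by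
  rw [(hasFDerivAt_harmonicEnd n c hz).fderiv, injective_reMulCLM_prod_iff]
  by_cases hzim : z.im = 0
  · have hzre : z = z.re := Complex.ext rfl hzim
    have hx : z.re ≠ 0 := fun h => hz (by rw [hzre, h, ofReal_zero])
    rw [hzre]
    simp [← ofReal_pow, hx]
  · simp [hzim, normSq_eq_zero.not.mpr hz]

theorem stmt_18_general (n : ℕ) (c : ℝ) (f : ℂ → ℝ × ℝ × ℝ)
    (hf : ∀ z, f z =
      (z.re, (z ^ 2).re / 2 - c * (z ^ (n + 1)).im / ((n : ℝ) + 1),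
        Real.log (‖z‖))) :
    c ≠ 0 ↔
      ∃ ε > (0 : ℝ), ∀ z : ℂ, 0 < ‖z‖ → ‖z‖ < ε →
        Function.Injective (fderiv ℝ f z) := by
  obtain rfl : f = harmonicEnd n c := funext hf
  constructor
  · intro hc
    exact ⟨1, one_pos, fun z hz _ =>
      (injective_fderiv_harmonicEnd_iff n c (norm_pos_iff.mp hz)).2 (Or.inr hc)⟩
  · rintro ⟨ε, hε, hinj⟩
    have hnorm : ‖((ε / 2 : ℝ) : ℂ)‖ = ε / 2 := by
      rw [norm_real, Real.norm_of_nonneg (by positivity)]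
    have hpos : 0 < ‖((ε / 2 : ℝ) : ℂ)‖ := by rw [hnorm]; positivity
    refine ((injective_fderiv_harmonicEnd_iff n c (norm_pos_iff.mp hpos)).1 ?_).resolve_left
      (by simp)
    exact hinj _ hpos (by rw [hnorm]; linarith)

/-- Regularity of a harmonic end of order 1 depends on higher-order terms:
the end with data `ω₁ = dz`, `ω₂ = (z + c·i·zⁿ)dz`, `ω₃ = dz/z` is an
immersion on some punctured disk around `0` if and only if `c ≠ 0`. -/
theorem stmt_18 (n : ℕ) (hn : 2 ≤ n) (c : ℝ) (f : ℂ → ℝ × ℝ × ℝ)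
    (hf : ∀ z, f z =
      (z.re, (z ^ 2).re / 2 - c * (z ^ (n + 1)).im / ((n : ℝ) + 1),
        Real.log (‖z‖))) :
    c ≠ 0 ↔
      ∃ ε > (0 : ℝ), ∀ z : ℂ, 0 < ‖z‖ → ‖z‖ < ε →
        Function.Injective (fderiv ℝ f z) :=
  stmt_18_general n c f hf
end
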